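/- arXiv:2209.03091 — 6 statements merged into one kernel-verified Lean document; each statement's English description precedes it below -/
import Mathlib

section
/- Let H be a real Hilbert space, f_n, f_{n+1} ∈ H with f_{n+1} = f_n - c_{n+1}φ_{n+1} where ‖φ_{n+1}‖ = 1 and ⟨f_n, φ_{n+1}⟩ ≥ c·t_{n+1}‖f_n‖ for constants c > 0, t_{n+1} ∈ (0,1], c_{n+1} > 0. Suppose also c_{n+1}/t_{n+1} < ε, c_{n+1} < ε/c, and ‖f_n‖ ≥ ε/c. Then ‖f_{n+1}‖² ≤ ‖f_n‖² - c_{n+1} t_{n+1} ε. -/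
open RealInnerProductSpace

/-! In `‖fₙ₊₁‖² = ‖fₙ‖² - 2cₙ⟪fₙ, φ⟫ + cₙ²` we have `⟪fₙ, φ⟫ ≥ c t ‖fₙ‖ ≥ t ε` and `cₙ < t ε`,
so the linear term beats the quadratic one by at least `cₙ t ε`. -/

theorem norm_sub_smul_sq_real {H : Type*} [NormedAddCommGroup H] [InnerProductSpace ℝ H]
    (x u : H) (a : ℝ) : ‖x - a • u‖ ^ 2 = ‖x‖ ^ 2 - 2 * a * ⟪x, u⟫ + a ^ 2 * ‖u‖ ^ 2 := by
  rw [norm_sub_sq_real, real_inner_smul_right, norm_smul, Real.norm_eq_abs, mul_pow, sq_abs]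
  ring

theorem norm_sub_smul_sq_le_of_le_inner {H : Type*} [NormedAddCommGroup H]
    [InnerProductSpace ℝ H] {x u : H} {a b : ℝ} (hu : ‖u‖ = 1) (ha : 0 ≤ a) (hab : a ≤ b)
    (hb : b ≤ ⟪x, u⟫) : ‖x - a • u‖ ^ 2 ≤ ‖x‖ ^ 2 - a * b := by
  rw [norm_sub_smul_sq_real, hu]
  nlinarith [mul_le_mul_of_nonneg_left hb ha, mul_le_mul_of_nonneg_left hab ha]

theorem stmt_1_general (H : Type*) [NormedAddCommGroup H] [InnerProductSpace ℝ H]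
    (fn fn1 φ : H) (c t cn ε : ℝ)
    (hc : 0 < c) (ht0 : 0 < t) (hcn : 0 < cn)
    (hφ : ‖φ‖ = 1)
    (hstep : fn1 = fn - cn • φ)
    (hsel : c * t * ‖fn‖ ≤ ⟪fn, φ⟫)
    (h1 : cn / t < ε)
    (h3 : ε / c ≤ ‖fn‖) :
    ‖fn1‖ ^ 2 ≤ ‖fn‖ ^ 2 - cn * t * ε := by
  have hinner : t * ε ≤ ⟪fn, φ⟫ :=
    calc t * ε = c * t * (ε / c) := by field_simp
      _ ≤ c * t * ‖fn‖ := by gcongr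
      _ ≤ ⟪fn, φ⟫ := hsel
  have hcn_le : cn ≤ t * ε := by
    rw [div_lt_iff₀ ht0] at h1
    linarith
  rw [hstep, mul_assoc]
  exact norm_sub_smul_sq_le_of_le_inner hφ hcn.le hcn_le hinner

theorem stmt_1 (H : Type*) [NormedAddCommGroup H] [InnerProductSpace ℝ H]
    (fn fn1 φ : H) (c t cn ε : ℝ)
    (hc : 0 < c) (ht0 : 0 < t) (ht1 : t ≤ 1) (hcn : 0 < cn) (hε : 0 < ε)
    (hφ : ‖φ‖ = 1)
    (hstep : fn1 = fn - cn • φ)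
    (hsel : c * t * ‖fn‖ ≤ ⟪fn, φ⟫)
    (h1 : cn / t < ε)
    (h2 : cn < ε / c)
    (h3 : ε / c ≤ ‖fn‖) :
    ‖fn1‖ ^ 2 ≤ ‖fn‖ ^ 2 - cn * t * ε :=
  stmt_1_general H fn fn1 φ c t cn ε hc ht0 hcn hφ hstep hsel h1 h3
end

section
/- Let H be a finite-dimensional real Hilbert space, D a symmetric dictionary in H, C = (c_n) a sequence of positive coefficients, and τ = (t_n) a sequence in (0,1] such that ∑ c_n t_n = ∞ and c_n/t_n → 0. Then for every f ∈ H, every realization of the greedy expansion of f with prescribed coefficients C and weakening sequence τ with respect to D converges to f; i.e., the remainders f_n = f - ∑_{m=1}^n c_m φ_m satisfy ‖f_n‖ → 0, where at each step φ_{m} ∈ D is chosen with ⟨f_{m-1}, φ_m⟩ ≥ t_m sup_{g∈D} ⟨f_{m-1}, g⟩. -/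
/-!
Write `r(x) = sup_{g ∈ D} ⟪x, g⟫`. Because `D` is symmetric and spans the finite-dimensional
space `H`, `r` is positive on the unit sphere, and by compactness and homogeneity
`r(x) ≥ δ ‖x‖` for some `δ > 0`. Expanding `‖f_{n+1}‖² = ‖f_n‖² - 2 c_n ⟪f_n, φ_n⟫ + c_n²`
and using the weak greedy choice gives
`‖f_{n+1}‖² ≤ ‖f_n‖² - 2 δ c_n t_n ‖f_n‖ + c_n²`.
Once `c_n < δ ε t_n`, each step with `‖f_n‖ ≥ ε` lowers `‖f_n‖²` by at least `δ ε c_n t_n`;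
since `∑ c_n t_n = ∞`, the norm eventually drops below `ε`, and afterwards it can only grow
by `c_n < ε` at a time while it is below `ε`, so it stays below `2 ε`.
-/

open RealInnerProductSpace Filter Finset Topology
open scoped Pointwise

section RealSequences

variable {a : ℕ → ℝ}

theorem exists_lt_of_sq_succ_le_sub {s : ℕ → ℝ} {ε κ : ℝ} {N : ℕ} (hκ : 0 < κ)
    (hs : Tendsto (fun n => ∑ m ∈ range n, s m) atTop atTop)
    (hstep : ∀ n ≥ N, ε ≤ a n → a (n + 1) ^ 2 ≤ a n ^ 2 - κ * s n) :
    ∃ n ≥ N, a n < ε := by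
  by_contra! hbig
  set C := a N ^ 2 + κ * ∑ m ∈ range N, s m
  have hbound : ∀ n ≥ N, a n ^ 2 ≤ C - κ * ∑ m ∈ range n, s m := by
    intro n hn
    induction n, hn using Nat.le_induction with
    | base => simp [C]
    | succ n hn ih =>
      rw [sum_range_succ]
      linarith [hstep n hn (hbig n hn)]
  obtain ⟨n, hsum, hn⟩ :=
    ((hs.eventually_gt_atTop (C / κ)).and (eventually_ge_atTop N)).exists
  rw [div_lt_iff₀' hκ] at hsum
  nlinarith [hbound n hn, sq_nonneg (a n)]

theorem tendsto_zero_of_sq_succ_le {c t : ℕ → ℝ} {δ : ℝ} (hδ : 0 < δ)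
    (ha : ∀ n, 0 ≤ a n) (hc : ∀ n, 0 ≤ c n) (ht : ∀ n, t n ∈ Set.Ioc (0 : ℝ) 1)
    (hdiv : Tendsto (fun n => ∑ m ∈ range n, c m * t m) atTop atTop)
    (hratio : Tendsto (fun n => c n / t n) atTop (𝓝 0))
    (hstep : ∀ n, a (n + 1) ^ 2 ≤ a n ^ 2 - 2 * δ * (c n * t n) * a n + c n ^ 2) :
    Tendsto a atTop (𝓝 0) := by
  have hct : ∀ n, 0 ≤ c n * t n := fun n => mul_nonneg (hc n) (ht n).1.le
  have hsucc : ∀ n, a (n + 1) ≤ a n + c n := fun n => by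
    refine (abs_le_of_sq_le_sq' ?_ (add_nonneg (ha n) (hc n))).2
    nlinarith [hstep n, mul_nonneg (mul_nonneg hδ.le (hct n)) (ha n), mul_nonneg (ha n) (hc n)]
  refine tendsto_order.2 ⟨fun b hb => .of_forall fun n => hb.trans_le (ha n), fun ε hε => ?_⟩
  set η := ε / 2 with hη
  have hη_pos : 0 < η := by positivity
  obtain ⟨N, hN⟩ := eventually_atTop.1 <|
    (hratio.eventually (gt_mem_nhds (mul_pos hδ hη_pos))).and (hratio.eventually (gt_mem_nhds hη_pos))
  have hc_lt : ∀ n ≥ N, c n < δ * η * t n ∧ c n < η := fun n hn => by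
    have ⟨h₁, h₂⟩ := hN n hn
    rw [div_lt_iff₀ (ht n).1] at h₁ h₂
    exact ⟨h₁, h₂.trans_le (mul_le_of_le_one_right hη_pos.le (ht n).2)⟩
  have hdecr : ∀ n ≥ N, η ≤ a n → a (n + 1) ^ 2 ≤ a n ^ 2 - δ * η * (c n * t n) := by
    intro n hn hbig
    -- `c n ^ 2 ≤ δ η c n t n` uses up only half of the drift `2 δ (c n t n) a n ≥ 2 δ η c n t n`
    have hsq : c n ^ 2 ≤ δ * η * (c n * t n) := by nlinarith [(hc_lt n hn).1, hc n]
    nlinarith [hstep n, mul_le_mul_of_nonneg_left hbig (mul_nonneg hδ.le (hct n))]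
  obtain ⟨M, hMN, hM⟩ := exists_lt_of_sq_succ_le_sub (mul_pos hδ hη_pos) hdiv hdecr
  have hstay : ∀ n ≥ M, a n < 2 * η := by
    intro n hn
    induction n, hn using Nat.le_induction with
    | base => linarith
    | succ n hn ih =>
      have hnN : N ≤ n := hMN.trans hn
      rcases lt_or_ge (a n) η with hsmall | hbig
      · linarith [hsucc n, (hc_lt n hnN).2]
      · have hsq : a (n + 1) ^ 2 ≤ a n ^ 2 := by
          linarith [hdecr n hnN hbig, mul_nonneg (mul_nonneg hδ.le hη_pos.le) (hct n)]
        linarith [(abs_le_of_sq_le_sq' hsq (ha n)).2]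
  exact eventually_atTop.2 ⟨M, fun n hn => by linarith [hstay n hn]⟩

end RealSequences

section SupInner

variable {H : Type*} [NormedAddCommGroup H] [InnerProductSpace ℝ H] {D : Set H}

noncomputable def supInner (D : Set H) (x : H) : ℝ :=
  sSup ((fun g => ⟪x, g⟫) '' D)

theorem bddAbove_inner_image (hD : ∀ g ∈ D, ‖g‖ ≤ 1) (x : H) :
    BddAbove ((fun g => ⟪x, g⟫) '' D) := by
  refine ⟨‖x‖, ?_⟩
  rintro _ ⟨g, hg, rfl⟩
  calc ⟪x, g⟫ ≤ ‖x‖ * ‖g‖ := real_inner_le_norm x g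
    _ ≤ ‖x‖ := mul_le_of_le_one_right (norm_nonneg x) (hD g hg)

theorem inner_le_supInner (hD : ∀ g ∈ D, ‖g‖ ≤ 1) (x : H) {g : H} (hg : g ∈ D) :
    ⟪x, g⟫ ≤ supInner D x :=
  le_csSup (bddAbove_inner_image hD x) ⟨g, hg, rfl⟩

theorem lipschitzWith_supInner (hD : ∀ g ∈ D, ‖g‖ ≤ 1) :
    LipschitzWith 1 (supInner D) := by
  refine LipschitzWith.of_le_add fun x y => ?_
  rcases D.eq_empty_or_nonempty with rfl | hne
  · simp [supInner]
  refine csSup_le (hne.image _) ?_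
  rintro _ ⟨g, hg, rfl⟩
  have hdiff : ⟪x - y, g⟫ ≤ ‖x - y‖ :=
    (real_inner_le_norm _ _).trans (mul_le_of_le_one_right (norm_nonneg _) (hD g hg))
  rw [inner_sub_left] at hdiff
  linarith [inner_le_supInner hD y hg, dist_eq_norm x y]

theorem supInner_smul_of_nonneg {r : ℝ} (hr : 0 ≤ r) (x : H) :
    supInner D (r • x) = r * supInner D x := by
  have himage : (fun g => ⟪r • x, g⟫) '' D = r • (fun g => ⟪x, g⟫) '' D := by
    rw [← Set.image_smul, Set.image_image]
    exact Set.image_congr fun g _ => real_inner_smul_left x g r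
  rw [supInner, himage, Real.sSup_smul_of_nonneg hr, smul_eq_mul, supInner]

theorem supInner_zero : supInner D 0 = 0 := by
  simpa using supInner_smul_of_nonneg (D := D) le_rfl (0 : H)

theorem supInner_pos (hD : ∀ g ∈ D, ‖g‖ ≤ 1) (hsymm : ∀ g ∈ D, -g ∈ D)
    (hspan : Submodule.span ℝ D = ⊤) {x : H} (hx : x ≠ 0) : 0 < supInner D x := by
  have hne : ∃ g ∈ D, ⟪x, g⟫ ≠ 0 := by
    by_contra! horth
    have hzero : innerₛₗ ℝ x = 0 := LinearMap.ext_on hspan fun g hg => horth g hg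
    exact hx (inner_self_eq_zero.1 (LinearMap.congr_fun hzero x))
  obtain ⟨g, hg, hgx⟩ := hne
  rcases hgx.lt_or_gt with hneg | hpos
  · refine lt_of_lt_of_le ?_ (inner_le_supInner hD x (hsymm g hg))
    rwa [inner_neg_right, neg_pos]
  · exact hpos.trans_le (inner_le_supInner hD x hg)

theorem exists_pos_mul_norm_le_supInner [FiniteDimensional ℝ H] (hD : ∀ g ∈ D, ‖g‖ ≤ 1)
    (hsymm : ∀ g ∈ D, -g ∈ D) (hspan : Submodule.span ℝ D = ⊤) :
    ∃ δ > 0, ∀ x, δ * ‖x‖ ≤ supInner D x := by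
  rcases subsingleton_or_nontrivial H with hH | hH
  · refine ⟨1, one_pos, fun x => ?_⟩
    simp [Subsingleton.elim x 0, supInner_zero]
  obtain ⟨u, hu, hmin⟩ := (isCompact_sphere (0 : H) 1).exists_isMinOn
    (NormedSpace.sphere_nonempty.2 zero_le_one) (lipschitzWith_supInner hD).continuous.continuousOn
  have hu0 : u ≠ 0 := ne_zero_of_mem_unit_sphere ⟨u, hu⟩
  refine ⟨supInner D u, supInner_pos hD hsymm hspan hu0, fun x => ?_⟩
  rcases eq_or_ne x 0 with rfl | hx
  · simp [supInner_zero]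
  have hxn : 0 < ‖x‖ := norm_pos_iff.2 hx
  have hunit : ‖x‖⁻¹ • x ∈ Metric.sphere (0 : H) 1 := by
    simp [norm_smul, hxn.ne']
  calc supInner D u * ‖x‖ ≤ supInner D (‖x‖⁻¹ • x) * ‖x‖ :=
        mul_le_mul_of_nonneg_right (hmin hunit) hxn.le
    _ = supInner D x := by
      rw [supInner_smul_of_nonneg (inv_nonneg.2 hxn.le)]
      field_simp

end SupInner

theorem norm_sub_smul_sq_of_norm_eq_one {H : Type*} [NormedAddCommGroup H]
    [InnerProductSpace ℝ H] (x : H) {g : H} (hg : ‖g‖ = 1) (c : ℝ) :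
    ‖x - c • g‖ ^ 2 = ‖x‖ ^ 2 - 2 * c * ⟪x, g⟫ + c ^ 2 := by
  rw [norm_sub_sq_real, real_inner_smul_right, norm_smul, hg, mul_one, Real.norm_eq_abs, sq_abs]
  ring

theorem stmt_3_general (H : Type*) [NormedAddCommGroup H] [InnerProductSpace ℝ H]
    [FiniteDimensional ℝ H] (D : Set H)
    (hunit : ∀ g ∈ D, ‖g‖ = 1)
    (hsymm : ∀ g ∈ D, -g ∈ D)
    (hcomplete : (Submodule.span ℝ D).topologicalClosure = ⊤)
    (c t : ℕ → ℝ)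
    (hc : ∀ n, 0 < c n) (ht : ∀ n, t n ∈ Set.Ioc (0 : ℝ) 1)
    (hdiv : Tendsto (fun n => ∑ m ∈ Finset.range n, c m * t m) atTop atTop)
    (hratio : Tendsto (fun n => c n / t n) atTop (nhds 0))
    (φ F : ℕ → H)
    (hφD : ∀ m, φ m ∈ D)
    (hsel : ∀ m, t m * sSup ((fun g => ⟪F m, g⟫) '' D) ≤ ⟪F m, φ m⟫)
    (hrec : ∀ m, F (m + 1) = F m - c m • φ m) :
    Tendsto (fun n => ‖F n‖) atTop (nhds 0) := by
  have hball : ∀ g ∈ D, ‖g‖ ≤ 1 := fun g hg => (hunit g hg).le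
  have hspan : Submodule.span ℝ D = ⊤ := by
    rwa [Submodule.topologicalClosure_eq_self] at hcomplete
  obtain ⟨δ, hδ, hδle⟩ := exists_pos_mul_norm_le_supInner hball hsymm hspan
  refine tendsto_zero_of_sq_succ_le hδ (fun n => norm_nonneg _) (fun n => (hc n).le) ht hdiv
    hratio fun n => ?_
  have hgreedy : t n * (δ * ‖F n‖) ≤ ⟪F n, φ n⟫ :=
    (mul_le_mul_of_nonneg_left (hδle (F n)) (ht n).1.le).trans (hsel n)
  rw [hrec n, norm_sub_smul_sq_of_norm_eq_one _ (hunit _ (hφD n))]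
  nlinarith [hc n]

theorem stmt_3 (H : Type*) [NormedAddCommGroup H] [InnerProductSpace ℝ H]
    [FiniteDimensional ℝ H] (D : Set H)
    (hunit : ∀ g ∈ D, ‖g‖ = 1)
    (hsymm : ∀ g ∈ D, -g ∈ D)
    (hcomplete : (Submodule.span ℝ D).topologicalClosure = ⊤)
    (c t : ℕ → ℝ)
    (hc : ∀ n, 0 < c n) (ht : ∀ n, t n ∈ Set.Ioc (0 : ℝ) 1)
    (hdiv : Tendsto (fun n => ∑ m ∈ Finset.range n, c m * t m) atTop atTop)
    (hratio : Tendsto (fun n => c n / t n) atTop (nhds 0))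
    (f : H) (φ F : ℕ → H)
    (hφD : ∀ m, φ m ∈ D)
    (hF0 : F 0 = f)
    (hsel : ∀ m, t m * sSup ((fun g => ⟪F m, g⟫) '' D) ≤ ⟪F m, φ m⟫)
    (hrec : ∀ m, F (m + 1) = F m - c m • φ m) :
    Tendsto (fun n => ‖F n‖) atTop (nhds 0) :=
  stmt_3_general H D hunit hsymm hcomplete c t hc ht hdiv hratio φ F hφD hsel hrec
end

section
/- Let H be a real Hilbert space, (f_n) a sequence in H defined by f_n = f_{n-1} - c_n e_{k_n} where each e_{k_n} is an element of a symmetric dictionary D (unit vectors) satisfying ⟨f_{n-1}, e_{k_n}⟩ ≥ t · sup_{e∈D}⟨f_{n-1}, e⟩ with t ∈ (0,1], and c_n > 0 with ∑ c_n = ∞ and c_n → 0. If the norms ‖f_n‖ are bounded, then liminf_{n→∞} sup_{e∈D} ⟨f_n, e⟩ = 0. -/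
open RealInnerProductSpace Filter

theorem stmt_5 (H : Type*) [NormedAddCommGroup H] [InnerProductSpace ℝ H]
    [CompleteSpace H] (D : Set H)
    (hunit : ∀ g ∈ D, ‖g‖ = 1)
    (hsymm : ∀ g ∈ D, -g ∈ D)
    (hcomplete : (Submodule.span ℝ D).topologicalClosure = ⊤)
    (t : ℝ) (ht : t ∈ Set.Ioc (0 : ℝ) 1)
    (c : ℕ → ℝ) (hc : ∀ n, 0 < c n)
    (hcdiv : Tendsto (fun n => ∑ m ∈ Finset.range n, c m) atTop atTop)
    (hc0 : Tendsto c atTop (nhds 0))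
    (e F : ℕ → H)
    (heD : ∀ n, e n ∈ D)
    (hsel : ∀ n, t * sSup ((fun g => ⟪F n, g⟫) '' D) ≤ ⟪F n, e n⟫)
    (hrec : ∀ n, F (n + 1) = F n - c n • e n)
    (hbd : ∃ B : ℝ, ∀ n, ‖F n‖ ≤ B) :
    liminf (fun n => sSup ((fun g => ⟪F n, g⟫) '' D)) atTop = 0 := by
  obtain ⟨B, hB⟩ := hbd
  obtain ⟨ht0, ht1⟩ := ht
  set s : ℕ → ℝ := fun n => sSup ((fun g => ⟪F n, g⟫) '' D) with hs
  have hbddA : ∀ n, BddAbove ((fun g => ⟪F n, g⟫) '' D) := by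
    intro n
    refine ⟨B, ?_⟩
    rintro y ⟨g, hg, rfl⟩
    calc ⟪F n, g⟫ ≤ ‖F n‖ * ‖g‖ := real_inner_le_norm _ _
      _ = ‖F n‖ := by rw [hunit g hg, mul_one]
      _ ≤ B := hB n
  have hsle : ∀ n, s n ≤ B := by
    intro n
    refine csSup_le ⟨⟪F n, e n⟫, ⟨e n, heD n, rfl⟩⟩ ?_
    rintro y ⟨g, hg, rfl⟩
    calc ⟪F n, g⟫ ≤ ‖F n‖ * ‖g‖ := real_inner_le_norm _ _
      _ = ‖F n‖ := by rw [hunit g hg, mul_one]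
      _ ≤ B := hB n
  have hsnn : ∀ n, 0 ≤ s n := by
    intro n
    have h1 : ⟪F n, e n⟫ ≤ s n := le_csSup (hbddA n) ⟨e n, heD n, rfl⟩
    have h2 : ⟪F n, -(e n)⟫ ≤ s n :=
      le_csSup (hbddA n) ⟨-(e n), hsymm _ (heD n), rfl⟩
    rw [inner_neg_right] at h2
    linarith
  have hid : ∀ n, ‖F (n + 1)‖ ^ 2 = ‖F n‖ ^ 2 - 2 * (c n * ⟪F n, e n⟫) + c n ^ 2 := by
    intro n
    rw [hrec n, @norm_sub_sq_real, real_inner_smul_right, norm_smul, hunit _ (heD n)]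
    rw [Real.norm_eq_abs, abs_of_pos (hc n)]
    ring
  have hbdd_le : IsBoundedUnder (· ≤ ·) atTop s := isBoundedUnder_of ⟨B, hsle⟩
  have hbdd_ge : IsBoundedUnder (· ≥ ·) atTop s := isBoundedUnder_of ⟨0, hsnn⟩
  have hlim_nn : 0 ≤ liminf s atTop :=
    le_liminf_of_le hbdd_le.isCoboundedUnder_ge (Eventually.of_forall hsnn)
  by_contra hne
  have hlim_pos : 0 < liminf s atTop := lt_of_le_of_ne hlim_nn (Ne.symm hne)
  set δ := liminf s atTop / 2 with hδdef
  have hδ : 0 < δ := by positivity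
  have hev1 : ∀ᶠ n in atTop, δ < s n := by
    refine eventually_lt_of_lt_liminf ?_ hbdd_ge
    linarith
  have hev2 : ∀ᶠ n in atTop, c n < t * δ :=
    hc0.eventually_lt_const (by positivity)
  obtain ⟨N, hN⟩ := (hev1.and hev2).exists_forall_of_atTop
  have key : ∀ n, N ≤ n → ‖F n‖ ^ 2 + t * δ * ∑ m ∈ Finset.Ico N n, c m ≤ ‖F N‖ ^ 2 := by
    intro n hn
    induction n, hn using Nat.le_induction with
    | base => simp
    | succ n hn ih =>
      obtain ⟨hδs, hctδ⟩ := hN n hn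
      have hsel' : t * s n ≤ ⟪F n, e n⟫ := hsel n
      have hinner : t * δ ≤ ⟪F n, e n⟫ := by nlinarith
      have hcpos := hc n
      rw [Finset.sum_Ico_succ_top hn, hid n]
      nlinarith [hcpos.le, mul_le_mul_of_nonneg_left hinner hcpos.le]
  -- derive contradiction from divergence
  obtain ⟨n, hn1, hn2⟩ :
      ∃ n, N ≤ n ∧ (∑ m ∈ Finset.range N, c m) + (‖F N‖ ^ 2 + 1) / (t * δ)
        ≤ ∑ m ∈ Finset.range n, c m := by
    have := (hcdiv.eventually_ge_atTop
      ((∑ m ∈ Finset.range N, c m) + (‖F N‖ ^ 2 + 1) / (t * δ))).and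
      (eventually_ge_atTop N)
    obtain ⟨n, h1, h2⟩ := this.exists
    exact ⟨n, h2, h1⟩
  have hsum : (‖F N‖ ^ 2 + 1) / (t * δ) ≤ ∑ m ∈ Finset.Ico N n, c m := by
    rw [Finset.sum_Ico_eq_sub _ hn1]
    linarith
  have hkey := key n hn1
  have hnorm : (0 : ℝ) ≤ ‖F n‖ ^ 2 := by positivity
  have htδ : 0 < t * δ := by positivity
  have : ‖F N‖ ^ 2 + 1 = t * δ * ((‖F N‖ ^ 2 + 1) / (t * δ)) := by
    field_simp
  nlinarith [mul_le_mul_of_nonneg_left hsum htδ.le]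
end

section
/- Let H be a separable real Hilbert space with orthonormal basis (e_i) and dictionary D = {±e_i}. Let C = (c_p) be positive coefficients with ∑ c_p = ∞ and c_p → 0. Then for every f ∈ H, every greedy expansion of f with prescribed coefficients C and weakening parameter t = 1 converges to f, i.e., ‖f_n‖ → 0. -/
/-! Write `a n = ⟪F n, φ n⟫ = maxᵢ |⟪F n, e i⟫|`. A step lowers `‖F n‖²` by `c n (2 a n - c n)`,
and `|a n - c n|` is the new value of the selected coordinate, so `‖F n‖² - a n²` is antitone.
Divergence of `∑ c` forces `a n < ε` at some time after which `c < ε`, and from then on `a` stays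
below `ε`: thus `a n → 0`, and coordinates that are never selected vanish. At a time `n ≥ N`
minimising `a` on `[N, n]`, the coordinates selected before `N` contribute at most `N a n²` to
`‖F n‖²` and every other one at most its initial square; the initial squares outside the first
`N` selections sum to `o(1)` as `N → ∞`. So `‖F n‖` is small at some time, and the antitone
`‖F n‖² - a n²` together with `a n → 0` keeps it small afterwards. -/

open RealInnerProductSpace Filter Topology

theorem HilbertBasis.hasSum_sq_inner {ι E : Type*} [NormedAddCommGroup E] [InnerProductSpace ℝ E]
    (b : HilbertBasis ι ℝ E) (x : E) : HasSum (fun i => ⟪x, b i⟫ ^ 2) (‖x‖ ^ 2) := by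
  have hsq : (fun i => ⟪x, b i⟫ ^ 2) = fun i => ⟪x, b i⟫ * ⟪b i, x⟫ := by
    ext i
    rw [sq, real_inner_comm x (b i)]
  rw [hsq, ← real_inner_self_eq_norm_sq]
  exact b.hasSum_inner_mul_inner x x

theorem tendsto_tsum_indicator_compl_image_Iio {ι : Type*} {w : ι → ℝ} (hw : Summable w)
    {k : ℕ → ι} (hk : ∀ i, i ∉ Set.range k → w i = 0) :
    Tendsto (fun N => ∑' i, (k '' Set.Iio N)ᶜ.indicator w i) atTop (𝓝 0) := by
  have hlim : ∀ i, Tendsto (fun N => (k '' Set.Iio N)ᶜ.indicator w i) atTop (𝓝 0) := by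
    intro i
    by_cases hi : i ∈ Set.range k
    · obtain ⟨m, rfl⟩ := hi
      refine tendsto_const_nhds.congr' ?_
      filter_upwards [eventually_gt_atTop m] with N hN
      have hmem : k m ∈ k '' Set.Iio N := Set.mem_image_of_mem k (Set.mem_Iio.2 hN)
      exact (Set.indicator_of_notMem (Set.notMem_compl_iff.2 hmem) w).symm
    · have hzero : ∀ N, (k '' Set.Iio N)ᶜ.indicator w i = 0 := fun N => by simp [hk i hi]
      simpa only [hzero] using tendsto_const_nhds
  simpa using tendsto_tsum_of_dominated_convergence hw.abs hlim
    (Eventually.of_forall fun N i => norm_indicator_le_norm_self w i)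

theorem not_eventually_le_sub_mul_of_tendsto_sum {b c : ℕ → ℝ} {ε : ℝ} (hb : ∀ n, 0 ≤ b n)
    (hε : 0 < ε) (hcdiv : Tendsto (fun n => ∑ p ∈ Finset.range n, c p) atTop atTop) :
    ¬ ∀ᶠ n in atTop, b (n + 1) ≤ b n - ε * c n := by
  intro hdec
  obtain ⟨M, hM⟩ := eventually_atTop.1 hdec
  set v : ℕ → ℝ := fun n => b n + ε * ∑ p ∈ Finset.range n, c p
  have hv : ∀ n, M ≤ n → v n ≤ v M := by
    intro n hn
    induction n, hn using Nat.le_induction with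
    | base => exact le_rfl
    | succ n hn ih =>
      have hstep := hM n hn
      simp only [v, Finset.sum_range_succ] at ih ⊢
      linarith
  have hvtop : Tendsto v atTop atTop :=
    tendsto_atTop_add_left_of_le _ 0 hb (hcdiv.const_mul_atTop hε)
  obtain ⟨n, hn, hnM⟩ := ((hvtop.eventually_gt_atTop (v M)).and (eventually_ge_atTop M)).exists
  exact (hv n hnM).not_gt hn

section SignedBasis

variable {ι H : Type*} [NormedAddCommGroup H] [InnerProductSpace ℝ H]

theorem abs_inner_le_sSup_image_union_neg {v : ι → H} (hv : ∀ i, ‖v i‖ = 1) (x : H) (i : ι) :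
    |⟪x, v i⟫| ≤ sSup ((fun g => ⟪x, g⟫) '' (Set.range v ∪ Set.range fun i => -v i)) := by
  have hbdd : BddAbove ((fun g => ⟪x, g⟫) '' (Set.range v ∪ Set.range fun i => -v i)) := by
    refine ⟨‖x‖, ?_⟩
    rintro _ ⟨g, hg, rfl⟩
    have hg1 : ‖g‖ = 1 := by
      rcases hg with ⟨j, rfl⟩ | ⟨j, rfl⟩
      · exact hv j
      · rw [norm_neg, hv j]
    simpa [hg1] using real_inner_le_norm x g
  rw [abs_le']
  constructor
  · exact le_csSup hbdd ⟨v i, Or.inl ⟨i, rfl⟩, rfl⟩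
  · exact le_csSup hbdd ⟨-v i, Or.inr ⟨i, rfl⟩, inner_neg_right x (v i)⟩

/-- For the dictionary `{± e i}`, `φ n` maximizing `⟪F n, g⟫` amounts to `abs_inner_le`;
`k n` is the index of the atom `φ n`. -/
structure IsGreedyExpansion (e : HilbertBasis ι ℝ H) (c : ℕ → ℝ) (F φ : ℕ → H) (k : ℕ → ι) :
    Prop where
  succ_eq : ∀ n, F (n + 1) = F n - c n • φ n
  eq_or_eq_neg : ∀ n, φ n = e (k n) ∨ φ n = -e (k n)
  abs_inner_le : ∀ n i, |⟪F n, e i⟫| ≤ ⟪F n, φ n⟫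

theorem IsGreedyExpansion.of_sSup {e : HilbertBasis ι ℝ H} {c : ℕ → ℝ} {F φ : ℕ → H}
    (hφD : ∀ m, φ m ∈ Set.range e ∪ Set.range fun i => -e i)
    (hsel : ∀ m,
      ⟪F m, φ m⟫ = sSup ((fun g => ⟪F m, g⟫) '' (Set.range e ∪ Set.range fun i => -e i)))
    (hrec : ∀ m, F (m + 1) = F m - c m • φ m) :
    ∃ k, IsGreedyExpansion e c F φ k := by
  have hatom : ∀ m, ∃ i, φ m = e i ∨ φ m = -e i := by
    intro m
    rcases hφD m with ⟨i, hi⟩ | ⟨i, hi⟩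
    · exact ⟨i, Or.inl hi.symm⟩
    · exact ⟨i, Or.inr hi.symm⟩
  choose k hk using hatom
  refine ⟨k, hrec, hk, fun n i => ?_⟩
  rw [hsel n]
  exact abs_inner_le_sSup_image_union_neg e.orthonormal.1 (F n) i

namespace IsGreedyExpansion

variable {e : HilbertBasis ι ℝ H} {c : ℕ → ℝ} {F φ : ℕ → H} {k : ℕ → ι}

theorem norm_atom (h : IsGreedyExpansion e c F φ k) (n : ℕ) : ‖φ n‖ = 1 := by
  rcases h.eq_or_eq_neg n with hφ | hφ <;> simp [hφ, e.orthonormal.1 (k n)]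

theorem abs_inner_atom (h : IsGreedyExpansion e c F φ k) (x : H) (n : ℕ) :
    |⟪x, φ n⟫| = |⟪x, e (k n)⟫| := by
  rcases h.eq_or_eq_neg n with hφ | hφ <;> simp [hφ]

theorem inner_atom_eq_abs (h : IsGreedyExpansion e c F φ k) (n : ℕ) :
    ⟪F n, φ n⟫ = |⟪F n, e (k n)⟫| :=
  le_antisymm ((le_abs_self _).trans (h.abs_inner_atom (F n) n).le) (h.abs_inner_le n (k n))

theorem inner_atom_nonneg (h : IsGreedyExpansion e c F φ k) (n : ℕ) : 0 ≤ ⟪F n, φ n⟫ :=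
  (h.inner_atom_eq_abs n).symm ▸ abs_nonneg _

theorem inner_succ_of_ne (h : IsGreedyExpansion e c F φ k) {n : ℕ} {i : ι} (hi : k n ≠ i) :
    ⟪F (n + 1), e i⟫ = ⟪F n, e i⟫ := by
  have hφe : ⟪φ n, e i⟫ = 0 := by
    rcases h.eq_or_eq_neg n with hφ | hφ <;>
      simp [hφ, e.orthonormal.2 hi]
  rw [h.succ_eq, inner_sub_left, real_inner_smul_left, hφe, mul_zero, sub_zero]

theorem inner_succ_atom (h : IsGreedyExpansion e c F φ k) (n : ℕ) :
    ⟪F (n + 1), φ n⟫ = ⟪F n, φ n⟫ - c n := by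
  rw [h.succ_eq, inner_sub_left, real_inner_smul_left, real_inner_self_eq_norm_sq, h.norm_atom,
    one_pow, mul_one]

theorem norm_sq_succ (h : IsGreedyExpansion e c F φ k) (n : ℕ) :
    ‖F (n + 1)‖ ^ 2 = ‖F n‖ ^ 2 - c n * (2 * ⟪F n, φ n⟫ - c n) := by
  rw [h.succ_eq, norm_sub_sq_real, real_inner_smul_right, norm_smul, h.norm_atom,
    Real.norm_eq_abs, mul_one, sq_abs]
  ring

theorem abs_sub_le_inner_atom_succ (h : IsGreedyExpansion e c F φ k) (n : ℕ) :
    |⟪F n, φ n⟫ - c n| ≤ ⟪F (n + 1), φ (n + 1)⟫ := by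
  rw [← h.inner_succ_atom, h.abs_inner_atom]
  exact h.abs_inner_le (n + 1) (k n)

theorem inner_atom_succ_le (h : IsGreedyExpansion e c F φ k) (n : ℕ) :
    ⟪F (n + 1), φ (n + 1)⟫ ≤ max ⟪F n, φ n⟫ |⟪F n, φ n⟫ - c n| := by
  rw [h.inner_atom_eq_abs (n + 1)]
  by_cases hk : k n = k (n + 1)
  · rw [← hk, ← h.abs_inner_atom, h.inner_succ_atom]
    exact le_max_right _ _
  · rw [h.inner_succ_of_ne hk]
    exact (h.abs_inner_le n _).trans (le_max_left _ _)

theorem antitone_norm_sq_sub_sq (h : IsGreedyExpansion e c F φ k) :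
    Antitone fun n => ‖F n‖ ^ 2 - ⟪F n, φ n⟫ ^ 2 := by
  refine antitone_nat_of_succ_le fun n => ?_
  have hsq : (⟪F n, φ n⟫ - c n) ^ 2 ≤ ⟪F (n + 1), φ (n + 1)⟫ ^ 2 := by
    rw [← sq_abs]
    exact pow_le_pow_left₀ (abs_nonneg _) (h.abs_sub_le_inner_atom_succ n) 2
  rw [h.norm_sq_succ]
  nlinarith

theorem frequently_inner_atom_lt (h : IsGreedyExpansion e c F φ k) (hc : ∀ n, 0 ≤ c n)
    (hcdiv : Tendsto (fun n => ∑ p ∈ Finset.range n, c p) atTop atTop)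
    (hc0 : Tendsto c atTop (𝓝 0)) {ε : ℝ} (hε : 0 < ε) :
    ∃ᶠ n in atTop, ⟪F n, φ n⟫ < ε := by
  refine fun hbig => not_eventually_le_sub_mul_of_tendsto_sum (fun n => sq_nonneg ‖F n‖) hε
    hcdiv ?_
  filter_upwards [hbig, hc0.eventually (ge_mem_nhds hε)] with n hn hcn
  rw [h.norm_sq_succ]
  have hcn' : ε ≤ 2 * ⟪F n, φ n⟫ - c n := by linarith [not_lt.1 hn]
  nlinarith [mul_le_mul_of_nonneg_left hcn' (hc n)]

theorem inner_atom_lt_of_le (h : IsGreedyExpansion e c F φ k) (hc : ∀ n, 0 ≤ c n) {ε : ℝ}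
    {n₀ : ℕ} (hn₀ : ⟪F n₀, φ n₀⟫ < ε) (hcε : ∀ n, n₀ ≤ n → c n < ε) :
    ∀ n, n₀ ≤ n → ⟪F n, φ n⟫ < ε := by
  intro n hn
  induction n, hn using Nat.le_induction with
  | base => exact hn₀
  | succ n hn ih =>
    have hsub : |⟪F n, φ n⟫ - c n| < ε :=
      abs_sub_lt_iff.2 ⟨by linarith [hc n], by linarith [hcε n hn, h.inner_atom_nonneg n]⟩
    exact (h.inner_atom_succ_le n).trans_lt (max_lt ih hsub)

theorem tendsto_inner_atom (h : IsGreedyExpansion e c F φ k) (hc : ∀ n, 0 ≤ c n)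
    (hcdiv : Tendsto (fun n => ∑ p ∈ Finset.range n, c p) atTop atTop)
    (hc0 : Tendsto c atTop (𝓝 0)) :
    Tendsto (fun n => ⟪F n, φ n⟫) atTop (𝓝 0) := by
  refine tendsto_order.2 ⟨fun b hb => Eventually.of_forall fun n =>
    hb.trans_le (h.inner_atom_nonneg n), fun ε hε => ?_⟩
  obtain ⟨M, hM⟩ := eventually_atTop.1 (hc0.eventually (gt_mem_nhds hε))
  obtain ⟨n₀, hn₀M, hn₀⟩ := (h.frequently_inner_atom_lt hc hcdiv hc0 hε).forall_exists_of_atTop M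
  exact eventually_atTop.2
    ⟨n₀, h.inner_atom_lt_of_le hc hn₀ fun n hn => hM n (hn₀M.trans hn)⟩

theorem inner_eq_inner_zero_of_forall_ne (h : IsGreedyExpansion e c F φ k) {n : ℕ} {i : ι}
    (hi : ∀ m < n, k m ≠ i) : ⟪F n, e i⟫ = ⟪F 0, e i⟫ := by
  induction n with
  | zero => rfl
  | succ n ih =>
    rw [h.inner_succ_of_ne (hi n n.lt_succ_self)]
    exact ih fun m hm => hi m (hm.trans n.lt_succ_self)

theorem inner_zero_eq_zero_of_forall_ne (h : IsGreedyExpansion e c F φ k)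
    (ha : Tendsto (fun n => ⟪F n, φ n⟫) atTop (𝓝 0)) {i : ι} (hi : ∀ m, k m ≠ i) :
    ⟪F 0, e i⟫ = 0 := by
  have hle : ∀ n, |⟪F 0, e i⟫| ≤ ⟪F n, φ n⟫ := fun n =>
    h.inner_eq_inner_zero_of_forall_ne (fun m _ => hi m) ▸ h.abs_inner_le n i
  exact abs_nonpos_iff.1 (ge_of_tendsto' ha hle)

/-- At its first selection `m ≥ N` the coordinate still has its initial value, and it is the
maximal one there, `⟪F m, φ m⟫ ≥ ⟪F n, φ n⟫`. -/
theorem abs_inner_le_abs_inner_zero (h : IsGreedyExpansion e c F φ k) {N n : ℕ} {i : ι}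
    (hi : ∀ m < N, k m ≠ i) (hmin : ∀ j, N ≤ j → j < n → ⟪F n, φ n⟫ ≤ ⟪F j, φ j⟫) :
    |⟪F n, e i⟫| ≤ |⟪F 0, e i⟫| := by
  classical
  by_cases hsel : ∃ m, m < n ∧ k m = i
  · obtain ⟨hmn, hmi⟩ := Nat.find_spec hsel
    have hfirst : ∀ m < Nat.find hsel, k m ≠ i := fun m hm hmi' =>
      Nat.find_min hsel hm ⟨hm.trans hmn, hmi'⟩
    have hNm : N ≤ Nat.find hsel := not_lt.1 fun hlt => hi _ hlt hmi
    calc |⟪F n, e i⟫| ≤ ⟪F n, φ n⟫ := h.abs_inner_le n i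
      _ ≤ ⟪F (Nat.find hsel), φ (Nat.find hsel)⟫ := hmin _ hNm hmn
      _ = |⟪F 0, e i⟫| := by
        rw [h.inner_atom_eq_abs, hmi, h.inner_eq_inner_zero_of_forall_ne hfirst]
  · simp only [not_exists, not_and] at hsel
    rw [h.inner_eq_inner_zero_of_forall_ne hsel]

theorem norm_sq_le_mul_sq_add_tsum (h : IsGreedyExpansion e c F φ k) {N n : ℕ}
    (hmin : ∀ j, N ≤ j → j < n → ⟪F n, φ n⟫ ≤ ⟪F j, φ j⟫) :
    ‖F n‖ ^ 2 ≤
      N * ⟪F n, φ n⟫ ^ 2 + ∑' i, (k '' Set.Iio N)ᶜ.indicator (fun i => ⟪F 0, e i⟫ ^ 2) i := by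
  classical
  set T := (Finset.range N).image k
  have hT : (T : Set ι) = k '' Set.Iio N := by simp [T]
  have hpar := e.hasSum_sq_inner (F n)
  rw [← hpar.tsum_eq, ← hpar.summable.sum_add_tsum_compl (s := T),
    tsum_subtype (↑T)ᶜ fun i => ⟪F n, e i⟫ ^ 2, hT]
  gcongr ?_ + ?_
  · calc ∑ i ∈ T, ⟪F n, e i⟫ ^ 2 ≤ T.card • ⟪F n, φ n⟫ ^ 2 :=
          Finset.sum_le_card_nsmul _ _ _ fun i _ => by
            rw [← sq_abs]
            exact pow_le_pow_left₀ (abs_nonneg _) (h.abs_inner_le n i) 2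
      _ ≤ N * ⟪F n, φ n⟫ ^ 2 := by
          rw [nsmul_eq_mul]
          gcongr
          exact_mod_cast Finset.card_image_le.trans (Finset.card_range N).le
  · refine Summable.tsum_le_tsum (fun i => ?_) (hpar.summable.indicator _)
      ((e.hasSum_sq_inner (F 0)).summable.indicator _)
    by_cases hi : i ∈ (k '' Set.Iio N)ᶜ
    · rw [Set.indicator_of_mem hi, Set.indicator_of_mem hi, ← sq_abs, ← sq_abs ⟪F 0, e i⟫]
      have hi' : ∀ m < N, k m ≠ i := fun m hm hmi => hi ⟨m, hm, hmi⟩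
      exact pow_le_pow_left₀ (abs_nonneg _) (h.abs_inner_le_abs_inner_zero hi' hmin) 2
    · rw [Set.indicator_of_notMem hi, Set.indicator_of_notMem hi]

theorem exists_norm_sq_lt (h : IsGreedyExpansion e c F φ k)
    (ha : Tendsto (fun n => ⟪F n, φ n⟫) atTop (𝓝 0)) {ε : ℝ} (hε : 0 < ε) :
    ∃ n, ‖F n‖ ^ 2 < ε := by
  have hpool := tendsto_tsum_indicator_compl_image_Iio (e.hasSum_sq_inner (F 0)).summable
    (k := k) fun i hi => by
      rw [h.inner_zero_eq_zero_of_forall_ne ha fun m hm => hi ⟨m, hm⟩, sq, mul_zero]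
  obtain ⟨N, hN⟩ := (hpool.eventually (gt_mem_nhds (half_pos hε))).exists
  have hsq : Tendsto (fun n => (N : ℝ) * ⟪F n, φ n⟫ ^ 2) atTop (𝓝 0) := by
    simpa using (ha.pow 2).const_mul (N : ℝ)
  obtain ⟨M, hM, hNM⟩ :=
    ((hsq.eventually (gt_mem_nhds (half_pos hε))).and (eventually_ge_atTop N)).exists
  obtain ⟨n, hn, hnmin⟩ := (Finset.Icc N M).exists_min_image (fun j => ⟪F j, φ j⟫)
    ⟨M, Finset.mem_Icc.2 ⟨hNM, le_rfl⟩⟩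
  have hnM : ⟪F n, φ n⟫ ^ 2 ≤ ⟪F M, φ M⟫ ^ 2 :=
    pow_le_pow_left₀ (h.inner_atom_nonneg n)
      (hnmin M (Finset.mem_Icc.2 ⟨hNM, le_rfl⟩)) 2
  have hbound := h.norm_sq_le_mul_sq_add_tsum (N := N) (n := n) fun j hNj hjn =>
    hnmin j (Finset.mem_Icc.2 ⟨hNj, hjn.le.trans (Finset.mem_Icc.1 hn).2⟩)
  refine ⟨n, hbound.trans_lt ?_⟩
  nlinarith [Nat.cast_nonneg (α := ℝ) N]

theorem tendsto_norm_zero (h : IsGreedyExpansion e c F φ k)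
    (ha : Tendsto (fun n => ⟪F n, φ n⟫) atTop (𝓝 0))
    (hsmall : ∀ ε > 0, ∃ n, ‖F n‖ ^ 2 < ε) :
    Tendsto (fun n => ‖F n‖) atTop (𝓝 0) := by
  have hsq : Tendsto (fun n => ‖F n‖ ^ 2) atTop (𝓝 0) := by
    refine tendsto_order.2 ⟨fun b hb => Eventually.of_forall fun n =>
      hb.trans_le (sq_nonneg _), fun ε hε => ?_⟩
    obtain ⟨n, hn⟩ := hsmall (ε / 2) (half_pos hε)
    have ha2 : Tendsto (fun n => ⟪F n, φ n⟫ ^ 2) atTop (𝓝 0) := by simpa using ha.pow 2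
    filter_upwards [ha2.eventually (gt_mem_nhds (half_pos hε)), eventually_ge_atTop n]
      with m hm hnm
    have hanti := h.antitone_norm_sq_sub_sq hnm
    nlinarith [sq_nonneg ⟪F n, φ n⟫]
  simpa using hsq.sqrt

end IsGreedyExpansion

end SignedBasis

theorem stmt_7_general (H : Type*) [NormedAddCommGroup H] [InnerProductSpace ℝ H]
    (e : HilbertBasis ℕ ℝ H)
    (D : Set H) (hD : D = Set.range (e : ℕ → H) ∪ Set.range (fun i => -(e i)))
    (c : ℕ → ℝ) (hc : ∀ p, 0 < c p)
    (hcdiv : Tendsto (fun n => ∑ p ∈ Finset.range n, c p) atTop atTop)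
    (hc0 : Tendsto c atTop (nhds 0))
    (φ F : ℕ → H)
    (hφD : ∀ m, φ m ∈ D)
    (hsel : ∀ m, ⟪F m, φ m⟫ = sSup ((fun g => ⟪F m, g⟫) '' D))
    (hrec : ∀ m, F (m + 1) = F m - c m • φ m) :
    Tendsto (fun n => ‖F n‖) atTop (nhds 0) := by
  subst hD
  obtain ⟨k, h⟩ := IsGreedyExpansion.of_sSup hφD hsel hrec
  have ha := h.tendsto_inner_atom (fun p => (hc p).le) hcdiv hc0
  exact h.tendsto_norm_zero ha fun ε hε => h.exists_norm_sq_lt ha hε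

theorem stmt_7 (H : Type*) [NormedAddCommGroup H] [InnerProductSpace ℝ H]
    (e : HilbertBasis ℕ ℝ H)
    (D : Set H) (hD : D = Set.range (e : ℕ → H) ∪ Set.range (fun i => -(e i)))
    (c : ℕ → ℝ) (hc : ∀ p, 0 < c p)
    (hcdiv : Tendsto (fun n => ∑ p ∈ Finset.range n, c p) atTop atTop)
    (hc0 : Tendsto c atTop (nhds 0))
    (f : H) (φ F : ℕ → H)
    (hφD : ∀ m, φ m ∈ D)
    (hF0 : F 0 = f)
    (hsel : ∀ m, ⟪F m, φ m⟫ = sSup ((fun g => ⟪F m, g⟫) '' D))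
    (hrec : ∀ m, F (m + 1) = F m - c m • φ m) :
    Tendsto (fun n => ‖F n‖) atTop (nhds 0) :=
  stmt_7_general H e D hD c hc hcdiv hc0 φ F hφD hsel hrec
end

section
/- Let H be a separable infinite-dimensional real Hilbert space with orthonormal basis (e_i), D = {±e_i}, and t ∈ (0,1). There exist f ∈ H and a sequence of positive coefficients (c_n) with c_n → 0 and ∑ c_n = ∞ such that some realization of the greedy expansion of f with respect to D with prescribed coefficients (c_n) and weakening parameter t does not converge to f; in fact limsup_{n→∞} ‖f_n‖ ≥ 1. -/
/-!
Block `j` of `f` consists of `(j + 1)^2` equal coordinates `t^(j+1) / (j+1)`, so `f ∈ ℓ²`.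
The blocks are processed one after the other, and block `j` is swept `j + 2` times. During each
of the first `j + 1` sweeps every coordinate `±a` of the block is replaced by `∓a / t`, with
coefficient `a + a / t`; the coordinates not yet touched in the sweep are then exactly `t` times
the largest coordinate, so every step is a legal weak greedy step. After these sweeps all
`(j + 1)^2` coordinates of the block are `±1 / (j+1)`, hence `‖f_m‖ ≥ 1`, and the last sweep
kills the block with coefficients `1 / (j+1)` which add up to `j + 1`. All coefficients during
block `j` are at most `2 / (j+1)`, so they tend to zero while their sum diverges.
-/

open Finset Filter RealInnerProductSpace

namespace WeakGreedyCounterexample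

section Blocks

variable (L : ℕ → ℕ)

def blockStart (j : ℕ) : ℕ := ∑ i ∈ range j, L i

/-- The block containing `n` when `ℕ` is cut into consecutive blocks of lengths
`L 0, L 1, …`. -/
def blockOf (n : ℕ) : ℕ := Nat.findGreatest (fun j => blockStart L j ≤ n) n

variable {L}

lemma blockStart_succ (j : ℕ) : blockStart L (j + 1) = blockStart L j + L j :=
  sum_range_succ _ _

lemma blockStart_mono : Monotone (blockStart L) :=
  fun _ _ h => sum_le_sum_of_subset (range_mono h)

lemma le_blockStart (hL : ∀ j, 0 < L j) (j : ℕ) : j ≤ blockStart L j := by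
  induction j with
  | zero => exact Nat.zero_le _
  | succ j ih => rw [blockStart_succ]; have := hL j; omega

lemma blockStart_blockOf_le (n : ℕ) : blockStart L (blockOf L n) ≤ n :=
  Nat.findGreatest_spec (P := fun j => blockStart L j ≤ n) (Nat.zero_le n) (by simp [blockStart])

lemma blockOf_eq_iff (hL : ∀ j, 0 < L j) {n j : ℕ} :
    blockOf L n = j ↔ blockStart L j ≤ n ∧ n < blockStart L (j + 1) := by
  constructor
  · rintro rfl
    refine ⟨blockStart_blockOf_le n, ?_⟩
    by_contra! h
    exact Nat.findGreatest_is_greatest (Nat.lt_succ_self _) ((le_blockStart hL _).trans h) h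
  · rintro ⟨h1, h2⟩
    refine Nat.findGreatest_eq_iff.2
      ⟨(le_blockStart hL j).trans h1, fun _ => h1, fun k hjk _ hk => ?_⟩
    have := blockStart_mono (L := L) (show j + 1 ≤ k from hjk)
    omega

lemma blockOf_blockStart_add (hL : ∀ j, 0 < L j) {j q : ℕ} (hq : q < L j) :
    blockOf L (blockStart L j + q) = j :=
  (blockOf_eq_iff hL).2 ⟨by omega, by rw [blockStart_succ]; omega⟩

lemma exists_eq_blockStart_add (hL : ∀ j, 0 < L j) (n : ℕ) :
    ∃ j q, q < L j ∧ n = blockStart L j + q := by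
  have h := ((blockOf_eq_iff hL).1 rfl : _ ∧ n < blockStart L (blockOf L n + 1))
  rw [blockStart_succ] at h
  exact ⟨blockOf L n, n - blockStart L (blockOf L n), by omega, by omega⟩

lemma blockStart_add_inj (hL : ∀ j, 0 < L j) {j j' q q' : ℕ} (hq : q < L j) (hq' : q' < L j') :
    blockStart L j + q = blockStart L j' + q' ↔ j = j' ∧ q = q' := by
  refine ⟨fun h => ?_, by rintro ⟨rfl, rfl⟩; rfl⟩
  have hj : j = j' := by
    rw [← blockOf_blockStart_add hL hq, h, blockOf_blockStart_add hL hq']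
  subst hj
  exact ⟨rfl, by omega⟩

lemma tendsto_blockOf (hL : ∀ j, 0 < L j) : Tendsto (blockOf L) atTop atTop :=
  tendsto_atTop_atTop.2 fun j =>
    ⟨blockStart L j, fun _ hn => Nat.le_findGreatest ((le_blockStart hL j).trans hn) hn⟩

lemma sum_range_blockStart {M : Type*} [AddCommMonoid M] (g : ℕ → M) (J : ℕ) :
    ∑ i ∈ range (blockStart L J), g i =
      ∑ j ∈ range J, ∑ q ∈ range (L j), g (blockStart L j + q) := by
  induction J with
  | zero => simp [blockStart]
  | succ J ih => rw [blockStart_succ, sum_range_add, ih, sum_range_succ]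

lemma sum_comp_blockOf_le (hL : ∀ j, 0 < L j) {g : ℕ → ℝ} (hg : ∀ j, 0 ≤ g j) {C : ℝ}
    (hC : ∀ J, ∑ j ∈ range J, (L j : ℝ) * g j ≤ C) (s : Finset ℕ) :
    ∑ i ∈ s, g (blockOf L i) ≤ C := by
  obtain ⟨J, hJ⟩ := s.exists_nat_subset_range
  calc ∑ i ∈ s, g (blockOf L i)
      ≤ ∑ i ∈ range (blockStart L J), g (blockOf L i) :=
        sum_le_sum_of_subset_of_nonneg (hJ.trans (range_mono (le_blockStart hL J)))
          fun _ _ _ => hg _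
    _ = ∑ j ∈ range J, (L j : ℝ) * g j := by
        rw [sum_range_blockStart]
        refine sum_congr rfl fun j _ => ?_
        rw [sum_congr rfl fun q hq => by rw [blockOf_blockStart_add hL (mem_range.1 hq)],
          sum_const, card_range, nsmul_eq_mul]
    _ ≤ C := hC J

end Blocks

section Schedule

/-! Coordinates come in blocks of length `blockLen j`; the steps come in stages of length
`stageLen j`, stage `j` sweeping `j + 2` times through block `j`. -/

def blockLen (j : ℕ) : ℕ := (j + 1) ^ 2

def stageLen (j : ℕ) : ℕ := (j + 2) * blockLen j

def stage (m : ℕ) : ℕ := blockOf stageLen m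

def stageTime (m : ℕ) : ℕ := m - blockStart stageLen (stage m)

def pass (m : ℕ) : ℕ := stageTime m / blockLen (stage m)

def slot (m : ℕ) : ℕ := stageTime m % blockLen (stage m)

def target (m : ℕ) : ℕ := blockStart blockLen (stage m) + slot m

/-- The step at which the last sweep of stage `j`, the one killing block `j`, begins. -/
def killTime (j : ℕ) : ℕ := blockStart stageLen j + (j + 1) * blockLen j

/-- The number of `p` with `p * K + q < r`. -/
def hitCount (K r q : ℕ) : ℕ := r / K + if q < r % K then 1 else 0

/-- How often slot `q` of block `b` has been hit before step `m`; the clamped time is the time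
elapsed in stage `b`. -/
def hits (b q m : ℕ) : ℕ :=
  hitCount (blockLen b) (min (m - blockStart stageLen b) (stageLen b)) q

lemma blockLen_pos (j : ℕ) : 0 < blockLen j := by unfold blockLen; positivity

lemma stageLen_pos (j : ℕ) : 0 < stageLen j := by
  unfold stageLen; have := blockLen_pos j; positivity

lemma stage_eq_iff {m j : ℕ} :
    stage m = j ↔ blockStart stageLen j ≤ m ∧ m < blockStart stageLen j + stageLen j := by
  rw [stage, blockOf_eq_iff stageLen_pos, blockStart_succ]

lemma stageStart_le (m : ℕ) : blockStart stageLen (stage m) ≤ m := (stage_eq_iff.1 rfl).1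

lemma lt_stageStart_add (m : ℕ) : m < blockStart stageLen (stage m) + stageLen (stage m) :=
  (stage_eq_iff.1 rfl).2

lemma slot_lt (m : ℕ) : slot m < blockLen (stage m) := Nat.mod_lt _ (blockLen_pos _)

lemma pass_le (m : ℕ) : pass m ≤ stage m + 1 := by
  have h := lt_stageStart_add m
  have := stageStart_le m
  have : stageTime m < (stage m + 2) * blockLen (stage m) := by
    unfold stageTime; rw [stageLen] at h; omega
  have := (Nat.div_lt_iff_lt_mul (blockLen_pos _)).2 this
  unfold pass; omega

lemma stage_killTime_add {j q : ℕ} (hq : q < blockLen j) :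
    stage (killTime j + q) = j ∧ pass (killTime j + q) = j + 1 ∧ slot (killTime j + q) = q := by
  have hlen : stageLen j = (j + 1) * blockLen j + blockLen j := by unfold stageLen; ring
  have hstage : stage (killTime j + q) = j := stage_eq_iff.2 ⟨by unfold killTime; omega,
    by unfold killTime; omega⟩
  have htime : stageTime (killTime j + q) = (j + 1) * blockLen j + q := by
    rw [stageTime, hstage]; unfold killTime; omega
  obtain ⟨hdiv, hmod⟩ := (Nat.div_mod_unique (blockLen_pos j)).2
    (⟨by ring, hq⟩ : q + blockLen j * (j + 1) = (j + 1) * blockLen j + q ∧ q < blockLen j)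
  refine ⟨hstage, ?_, ?_⟩
  · rw [pass, htime, hstage, hdiv]
  · rw [slot, htime, hstage, hmod]

lemma le_killTime (j : ℕ) : j ≤ killTime j :=
  (le_blockStart stageLen_pos j).trans (Nat.le_add_right _ _)

lemma hitCount_succ {K q : ℕ} (hq : q < K) (r : ℕ) :
    hitCount K (r + 1) q = hitCount K r q + if q = r % K then 1 else 0 := by
  have hK : 0 < K := by omega
  have hmod := Nat.mod_lt r hK
  have hr := Nat.mod_add_div r K
  unfold hitCount
  by_cases h : r % K + 1 < K
  · obtain ⟨h1, h2⟩ := (Nat.div_mod_unique hK).2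
      (⟨by omega, h⟩ : r % K + 1 + K * (r / K) = r + 1 ∧ r % K + 1 < K)
    rw [h1, h2]
    split_ifs <;> omega
  · obtain ⟨h1, h2⟩ := (Nat.div_mod_unique hK).2
      (⟨by rw [mul_add]; omega, hK⟩ : 0 + K * (r / K + 1) = r + 1 ∧ 0 < K)
    rw [h1, h2]
    split_ifs <;> omega

lemma hits_succ {b q : ℕ} (hq : q < blockLen b) (m : ℕ) :
    hits b q (m + 1) = hits b q m + if b = stage m ∧ q = slot m then 1 else 0 := by
  unfold hits
  by_cases hb : stage m = b
  · obtain ⟨h1, h2⟩ := stage_eq_iff.1 hb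
    subst hb
    rw [show min (m + 1 - blockStart stageLen (stage m)) (stageLen (stage m)) = stageTime m + 1 by
        unfold stageTime; omega,
      show min (m - blockStart stageLen (stage m)) (stageLen (stage m)) = stageTime m by
        unfold stageTime; omega,
      hitCount_succ hq]
    simp [slot]
  · have : ¬ (blockStart stageLen b ≤ m ∧ m < blockStart stageLen b + stageLen b) :=
      fun h => hb (stage_eq_iff.2 h)
    rw [if_neg fun h => hb h.1.symm, add_zero,
      show min (m + 1 - blockStart stageLen b) (stageLen b)
        = min (m - blockStart stageLen b) (stageLen b) by omega]

lemma hits_stage (m q : ℕ) : hits (stage m) q m = pass m + if q < slot m then 1 else 0 := by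
  have := lt_stageStart_add m
  unfold hits
  rw [show min (m - blockStart stageLen (stage m)) (stageLen (stage m)) = stageTime m by
    unfold stageTime; omega]
  rfl

lemma hits_of_lt_stage {b m : ℕ} (h : b < stage m) (q : ℕ) : hits b q m = b + 2 := by
  have h1 := blockStart_mono (L := stageLen) (show b + 1 ≤ stage m from h)
  have h2 := stageStart_le m
  rw [blockStart_succ] at h1
  unfold hits hitCount
  rw [show min (m - blockStart stageLen b) (stageLen b) = stageLen b by omega, stageLen,
    Nat.mul_mod_left, Nat.mul_div_cancel _ (blockLen_pos b)]
  simp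

lemma hits_of_stage_lt {b m : ℕ} (h : stage m < b) (q : ℕ) : hits b q m = 0 := by
  have h1 := blockStart_mono (L := stageLen) (show stage m + 1 ≤ b from h)
  have h2 := lt_stageStart_add m
  rw [blockStart_succ] at h1
  unfold hits hitCount
  rw [show m - blockStart stageLen b = 0 by omega]
  simp

end Schedule

section Values

variable (t : ℝ)

/-- The absolute value of a coordinate of block `j` after `n` hits: it starts at
`t^(j+1) / (j+1)`, grows by the factor `1/t` with each of the first `j + 1` hits and vanishes
after the last one. -/
noncomputable def level (j n : ℕ) : ℝ := if n ≤ j + 1 then t ^ (j + 1 - n) / (j + 1) else 0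

noncomputable def entry (j n : ℕ) : ℝ := (-1) ^ n * level t j n

noncomputable def jump (j n : ℕ) : ℝ := level t j n + level t j (n + 1)

noncomputable def coeff (m : ℕ) : ℝ := jump t (stage m) (pass m)

/-- The `i`-th coordinate of `f_m`. -/
noncomputable def coord (m i : ℕ) : ℝ :=
  entry t (blockOf blockLen i)
    (hits (blockOf blockLen i) (i - blockStart blockLen (blockOf blockLen i)) m)

variable {t}

lemma level_nonneg (h0 : 0 ≤ t) (j n : ℕ) : 0 ≤ level t j n := by
  unfold level; split_ifs <;> positivity

lemma level_pos (h0 : 0 < t) {j n : ℕ} (hn : n ≤ j + 1) : 0 < level t j n := by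
  rw [level, if_pos hn]; positivity

lemma level_of_lt {j n : ℕ} (hn : j + 1 < n) : level t j n = 0 := if_neg (by omega)

lemma level_succ_self (j : ℕ) : level t j (j + 1) = 1 / (j + 1) := by simp [level]

lemma mul_level_succ_le (h0 : 0 ≤ t) (j n : ℕ) : t * level t j (n + 1) ≤ level t j n := by
  by_cases hn : n + 1 ≤ j + 1
  · rw [level, level, if_pos hn, if_pos (by omega), show j + 1 - n = j + 1 - (n + 1) + 1 by omega,
      pow_succ]
    exact le_of_eq (by ring)
  · rw [level_of_lt (by omega), mul_zero]; exact level_nonneg h0 j n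

lemma level_le_level (h0 : 0 ≤ t) (h1 : t ≤ 1) {j n n' : ℕ} (h : n ≤ n')
    (hn' : n' ≤ j + 1) : level t j n ≤ level t j n' := by
  rw [level, level, if_pos (h.trans hn'), if_pos hn']
  exact div_le_div_of_nonneg_right (pow_le_pow_of_le_one h0 h1 (by omega)) (by positivity)

lemma level_le_level_succ_self (h0 : 0 ≤ t) (h1 : t ≤ 1) (j n : ℕ) :
    level t j n ≤ level t j (j + 1) := by
  by_cases hn : n ≤ j + 1
  · exact level_le_level h0 h1 hn le_rfl
  · rw [level_of_lt (by omega)]; exact level_nonneg h0 _ _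

lemma level_zero_anti (h0 : 0 ≤ t) (h1 : t ≤ 1) {j j' : ℕ} (h : j ≤ j') :
    level t j' 0 ≤ level t j 0 := by
  simp only [level, zero_le, if_true, Nat.sub_zero]
  exact div_le_div₀ (by positivity) (pow_le_pow_of_le_one h0 h1 (by omega)) (by positivity)
    (by exact_mod_cast Nat.succ_le_succ h)

lemma blockLen_mul_level_sq {j n : ℕ} (hn : n ≤ j + 1) :
    (blockLen j : ℝ) * level t j n ^ 2 = (t ^ 2) ^ (j + 1 - n) := by
  rw [level, if_pos hn, blockLen]
  push_cast
  field_simp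
  ring

lemma abs_entry (h0 : 0 ≤ t) (j n : ℕ) : |entry t j n| = level t j n := by
  rw [entry, abs_mul, abs_pow, abs_neg, abs_one, one_pow, one_mul,
    abs_of_nonneg (level_nonneg h0 _ _)]

lemma entry_succ (j n : ℕ) : entry t j (n + 1) = entry t j n - (-1) ^ n * jump t j n := by
  rw [entry, entry, jump, pow_succ]; ring

lemma coeff_pos (h0 : 0 < t) (m : ℕ) : 0 < coeff t m :=
  add_pos_of_pos_of_nonneg (level_pos h0 (pass_le m)) (level_nonneg h0.le _ _)

lemma coeff_le (h0 : 0 ≤ t) (h1 : t ≤ 1) (m : ℕ) :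
    coeff t m ≤ 2 * (1 / ((stage m : ℝ) + 1)) := by
  rw [coeff, jump, two_mul, ← level_succ_self]
  exact add_le_add (level_le_level_succ_self h0 h1 _ _) (level_le_level_succ_self h0 h1 _ _)

lemma coeff_killTime_add {j q : ℕ} (hq : q < blockLen j) :
    coeff t (killTime j + q) = 1 / (j + 1) := by
  obtain ⟨hstage, hpass, -⟩ := stage_killTime_add hq
  rw [coeff, jump, hstage, hpass, level_succ_self, level_of_lt (by omega), add_zero]

lemma coord_blockStart_add {b q : ℕ} (hq : q < blockLen b) (m : ℕ) :
    coord t m (blockStart blockLen b + q) = entry t b (hits b q m) := by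
  rw [coord, blockOf_blockStart_add blockLen_pos hq, Nat.add_sub_cancel_left]

lemma coord_target (m : ℕ) : coord t m (target m) = entry t (stage m) (pass m) := by
  rw [target, coord_blockStart_add (slot_lt m), hits_stage, if_neg (lt_irrefl _), add_zero]

lemma coord_succ (m i : ℕ) :
    coord t (m + 1) i = coord t m i - if i = target m then (-1) ^ pass m * coeff t m else 0 := by
  obtain ⟨b, q, hq, rfl⟩ := exists_eq_blockStart_add blockLen_pos i
  rw [coord_blockStart_add hq, coord_blockStart_add hq, hits_succ hq, target]
  by_cases h : b = stage m ∧ q = slot m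
  · rw [if_pos h, if_pos ((blockStart_add_inj blockLen_pos hq (slot_lt m)).2 h)]
    obtain ⟨rfl, rfl⟩ := h
    rw [hits_stage, if_neg (lt_irrefl _), add_zero, entry_succ, coeff]
  · rw [if_neg h, if_neg (mt (blockStart_add_inj blockLen_pos hq (slot_lt m)).1 h), add_zero,
      sub_zero]

lemma mul_abs_coord_le (h0 : 0 < t) (h1 : t < 1) (m i : ℕ) :
    t * |coord t m i| ≤ level t (stage m) (pass m) := by
  obtain ⟨b, q, hq, rfl⟩ := exists_eq_blockStart_add blockLen_pos i
  rw [coord_blockStart_add hq, abs_entry h0.le]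
  rcases lt_trichotomy b (stage m) with hb | rfl | hb
  · rw [hits_of_lt_stage hb, level_of_lt (by omega), mul_zero]
    exact level_nonneg h0.le _ _
  · rw [hits_stage]
    split_ifs
    · exact mul_level_succ_le h0.le _ _
    · rw [add_zero]; exact mul_le_of_le_one_left (level_nonneg h0.le _ _) h1.le
  · rw [hits_of_stage_lt hb]
    calc t * level t b 0 ≤ level t b 0 := mul_le_of_le_one_left (level_nonneg h0.le _ _) h1.le
      _ ≤ level t (stage m) 0 := level_zero_anti h0.le h1.le hb.le
      _ ≤ level t (stage m) (pass m) := level_le_level h0.le h1.le (Nat.zero_le _) (pass_le m)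

lemma coord_sq_le (h0 : 0 ≤ t) (h1 : t ≤ 1) (m i : ℕ) :
    coord t m i ^ 2 ≤ (if blockOf blockLen i = stage m then
      level t (blockOf blockLen i) (blockOf blockLen i + 1) ^ 2 else 0)
        + level t (blockOf blockLen i) 0 ^ 2 := by
  obtain ⟨b, q, hq, rfl⟩ := exists_eq_blockStart_add blockLen_pos i
  rw [coord_blockStart_add hq, blockOf_blockStart_add blockLen_pos hq, ← sq_abs, abs_entry h0]
  rcases lt_trichotomy b (stage m) with hb | rfl | hb
  · rw [hits_of_lt_stage hb, level_of_lt (by omega), zero_pow two_ne_zero]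
    exact add_nonneg (by split_ifs <;> positivity) (sq_nonneg _)
  · rw [if_pos rfl]
    have := level_le_level_succ_self h0 h1 (stage m) (hits (stage m) q m)
    nlinarith [level_nonneg h0 (stage m) (hits (stage m) q m), sq_nonneg (level t (stage m) 0)]
  · rw [hits_of_stage_lt hb, if_neg hb.ne']
    simp

lemma sum_coord_sq_le (h0 : 0 ≤ t) (h1 : t < 1) (m : ℕ) (s : Finset ℕ) :
    ∑ i ∈ s, coord t m i ^ 2 ≤ 1 + (1 - t ^ 2)⁻¹ := by
  refine (sum_le_sum fun i _ => coord_sq_le h0 h1.le m i).trans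
    (sum_comp_blockOf_le blockLen_pos
      (g := fun b => (if b = stage m then level t b (b + 1) ^ 2 else 0) + level t b 0 ^ 2)
      (fun b => add_nonneg (by split_ifs <;> positivity) (sq_nonneg _)) (fun J => ?_) s)
  have ht2 : t ^ 2 < 1 := by nlinarith
  simp only [mul_add, mul_ite, mul_zero, sum_add_distrib,
    blockLen_mul_level_sq (le_refl _), blockLen_mul_level_sq (Nat.zero_le _), Nat.sub_self,
    pow_zero, sum_ite_eq', Nat.sub_zero]
  gcongr
  · split_ifs <;> norm_num
  · calc ∑ j ∈ range J, (t ^ 2) ^ (j + 1) ≤ ∑ j ∈ Ico 0 J, (t ^ 2) ^ j := by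
          rw [← range_eq_Ico]
          exact sum_le_sum fun j _ => pow_le_pow_of_le_one (by positivity) ht2.le (Nat.le_succ j)
      _ ≤ (t ^ 2) ^ 0 / (1 - t ^ 2) := geom_sum_Ico_le_of_lt_one (by positivity) ht2
      _ = (1 - t ^ 2)⁻¹ := by rw [pow_zero, one_div]

lemma sum_norm_rpow_two (a : ℕ → ℝ) (s : Finset ℕ) :
    ∑ i ∈ s, ‖a i‖ ^ (2 : ENNReal).toReal = ∑ i ∈ s, a i ^ 2 := by
  simp [Real.norm_eq_abs, sq_abs]

lemma memℓp_coord (h0 : 0 ≤ t) (h1 : t < 1) (m : ℕ) : Memℓp (coord t m) 2 :=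
  memℓp_gen' fun s => by rw [sum_norm_rpow_two]; exact sum_coord_sq_le h0 h1 m s

end Values

section HilbertSpace

variable {H : Type*} [NormedAddCommGroup H] [InnerProductSpace ℝ H] (e : HilbertBasis ℕ ℝ H)
  {t : ℝ}

noncomputable def dir (m : ℕ) : H := ((-1 : ℝ) ^ pass m) • e (target m)

lemma dir_mem (m : ℕ) : dir e m ∈ Set.range e ∪ Set.range fun i => -e i := by
  rcases neg_one_pow_eq_or ℝ (pass m) with h | h <;> simp [dir, h]

lemma inner_eq_coord {F : ℕ → H} (hF0 : ∀ i, ⟪e i, F 0⟫ = coord t 0 i)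
    (hF : ∀ m, F (m + 1) = F m - coeff t m • dir e m) (m i : ℕ) :
    ⟪e i, F m⟫ = coord t m i := by
  induction m generalizing i with
  | zero => exact hF0 i
  | succ m ih =>
    rw [hF, inner_sub_right, ih, dir, real_inner_smul_right, real_inner_smul_right,
      orthonormal_iff_ite.1 e.orthonormal, coord_succ]
    split_ifs <;> ring

variable {e}

lemma greedy_condition (h0 : 0 < t) (h1 : t < 1) {m : ℕ} {y : H}
    (hy : ∀ i, ⟪e i, y⟫ = coord t m i) :
    t * sSup ((fun g => ⟪y, g⟫) '' (Set.range e ∪ Set.range fun i => -e i)) ≤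
      ⟪y, dir e m⟫ := by
  have hdir : ⟪y, dir e m⟫ = level t (stage m) (pass m) := by
    rw [dir, real_inner_smul_right, real_inner_comm, hy, coord_target, entry, ← mul_assoc,
      ← mul_pow, neg_one_mul, neg_neg, one_pow, one_mul]
  rw [hdir, ← le_div_iff₀' h0]
  refine Real.sSup_le ?_ (div_nonneg (level_nonneg h0.le _ _) h0.le)
  rintro _ ⟨g, ⟨i, rfl⟩ | ⟨i, rfl⟩, rfl⟩ <;> rw [le_div_iff₀' h0]
  · show t * ⟪y, e i⟫ ≤ _
    rw [real_inner_comm, hy]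
    exact (mul_le_mul_of_nonneg_left (le_abs_self _) h0.le).trans (mul_abs_coord_le h0 h1 m i)
  · show t * ⟪y, -e i⟫ ≤ _
    rw [inner_neg_right, real_inner_comm, hy]
    exact (mul_le_mul_of_nonneg_left (neg_le_abs _) h0.le).trans (mul_abs_coord_le h0 h1 m i)

lemma norm_le_of_inner_eq_coord (h0 : 0 ≤ t) (h1 : t < 1) {m : ℕ} {y : H}
    (hy : ∀ i, ⟪e i, y⟫ = coord t m i) : ‖y‖ ≤ √(1 + (1 - t ^ 2)⁻¹) := by
  have ht2 : 0 < 1 - t ^ 2 := by nlinarith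
  rw [← e.repr.norm_map]
  refine lp.norm_le_of_forall_sum_le (by norm_num) (Real.sqrt_nonneg _) fun s => ?_
  simp only [HilbertBasis.repr_apply_apply, hy]
  rw [sum_norm_rpow_two, ENNReal.toReal_ofNat, Real.rpow_two, Real.sq_sqrt (by positivity)]
  exact sum_coord_sq_le h0 h1 m s

lemma one_le_norm_of_inner_eq_coord_killTime (h0 : 0 ≤ t) {j : ℕ} {y : H}
    (hy : ∀ i, ⟪e i, y⟫ = coord t (killTime j) i) : 1 ≤ ‖y‖ := by
  obtain ⟨hstage, hpass, hslot⟩ := stage_killTime_add (blockLen_pos j)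
  simp only [add_zero] at hstage hpass hslot
  have hbessel := (e.orthonormal.comp (blockStart blockLen j + ·) (add_right_injective _)
    ).sum_inner_products_le y (s := range (blockLen j))
  have hentry : ∀ q ∈ range (blockLen j),
      ‖⟪e (blockStart blockLen j + q), y⟫‖ ^ 2 = level t j (j + 1) ^ 2 := by
    intro q hq
    have hhits := hits_stage (killTime j) q
    rw [hstage, hpass, hslot] at hhits
    rw [hy, coord_blockStart_add (mem_range.1 hq), hhits, Real.norm_eq_abs, sq_abs, ← sq_abs,
      abs_entry h0, if_neg (Nat.not_lt_zero q), add_zero]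
  simp only [Function.comp_apply] at hbessel
  rw [sum_congr rfl hentry, sum_const, card_range, nsmul_eq_mul,
    blockLen_mul_level_sq le_rfl, Nat.sub_self, pow_zero] at hbessel
  nlinarith [norm_nonneg y]

end HilbertSpace

lemma le_sum_coeff {t : ℝ} (h0 : 0 < t) (j : ℕ) :
    (j : ℝ) + 1 ≤ ∑ p ∈ range (blockStart stageLen (j + 1)), coeff t p := by
  have hsplit : blockStart stageLen (j + 1) = killTime j + blockLen j := by
    rw [blockStart_succ, killTime, stageLen]; ring
  have hkill : (blockLen j : ℝ) * (1 / (j + 1)) = j + 1 := by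
    rw [blockLen]; push_cast; field_simp
  rw [hsplit, sum_range_add, sum_congr rfl fun q hq => coeff_killTime_add (mem_range.1 hq),
    sum_const, card_range, nsmul_eq_mul, hkill]
  linarith [sum_nonneg fun p (_ : p ∈ range (killTime j)) => (coeff_pos h0 p).le]

lemma tendsto_coeff {t : ℝ} (h0 : 0 < t) (h1 : t < 1) : Tendsto (coeff t) atTop (nhds 0) := by
  have h := tendsto_one_div_add_atTop_nhds_zero_nat.const_mul (2 : ℝ)
  rw [mul_zero] at h
  exact squeeze_zero (fun m => (coeff_pos h0 m).le) (coeff_le h0.le h1.le)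
    (h.comp (tendsto_blockOf stageLen_pos))

lemma tendsto_sum_coeff {t : ℝ} (h0 : 0 < t) :
    Tendsto (fun n => ∑ p ∈ range n, coeff t p) atTop atTop := by
  refine tendsto_atTop_atTop_of_monotone
    (monotone_nat_of_le_succ fun n => ?_) fun b => ?_
  · rw [sum_range_succ]; linarith [coeff_pos h0 n]
  · obtain ⟨j, hj⟩ := exists_nat_ge b
    exact ⟨_, hj.trans ((le_add_of_nonneg_right zero_le_one).trans (le_sum_coeff h0 j))⟩

end WeakGreedyCounterexample

open RealInnerProductSpace Filter WeakGreedyCounterexample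

theorem stmt_9 (H : Type*) [NormedAddCommGroup H] [InnerProductSpace ℝ H]
    (e : HilbertBasis ℕ ℝ H)
    (D : Set H) (hD : D = Set.range (e : ℕ → H) ∪ Set.range (fun i => -(e i)))
    (t : ℝ) (ht : t ∈ Set.Ioo (0 : ℝ) 1) :
    ∃ (f : H) (c : ℕ → ℝ) (φ F : ℕ → H),
      (∀ n, 0 < c n) ∧
      Tendsto c atTop (nhds 0) ∧
      Tendsto (fun n => ∑ p ∈ Finset.range n, c p) atTop atTop ∧
      (∀ m, φ m ∈ D) ∧
      F 0 = f ∧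
      (∀ m, t * sSup ((fun g => ⟪F m, g⟫) '' D) ≤ ⟪F m, φ m⟫) ∧
      (∀ m, F (m + 1) = F m - c m • φ m) ∧
      1 ≤ limsup (fun n => ‖F n‖) atTop := by
  obtain ⟨h0, h1⟩ := ht
  subst hD
  set f : H := e.repr.symm ⟨coord t 0, memℓp_coord h0.le h1 0⟩
  have hf : ∀ i, ⟪e i, f⟫ = coord t 0 i := fun i => by
    rw [← HilbertBasis.repr_apply_apply, LinearIsometryEquiv.apply_symm_apply]
  set F : ℕ → H := fun m => f - ∑ p ∈ Finset.range m, coeff t p • dir e p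
  have hF : ∀ m, F (m + 1) = F m - coeff t m • dir e m := fun m => by
    simp only [F, Finset.sum_range_succ]; abel
  have hcoord := inner_eq_coord e (F := F) (by simpa [F] using hf) hF
  refine ⟨f, coeff t, dir e, F, coeff_pos h0, tendsto_coeff h0 h1, tendsto_sum_coeff h0,
    dir_mem e, by simp [F], fun m => greedy_condition h0 h1 (hcoord m), hF, ?_⟩
  refine le_limsup_of_frequently_le (frequently_atTop.2 fun N => ⟨killTime N, le_killTime N,
    one_le_norm_of_inner_eq_coord_killTime h0.le (hcoord _)⟩)
    (isBoundedUnder_of ⟨_, fun m => norm_le_of_inner_eq_coord h0.le h1 (hcoord m)⟩)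
end

section
/- Let H₁,…,H_N be real Hilbert spaces with symmetric dictionaries D₁,…,D_N. Assume for each j and every positive coefficient sequence C with c_p → 0 and ∑ c_p = ∞, all greedy expansions (weakening parameter t = 1, prescribed coefficients C) of every element of H_j with respect to D_j converge. Let H = H₁ ⊕ ⋯ ⊕ H_N and D the dictionary consisting of elements with one component in some D_j and zeros elsewhere. Then for every f ∈ H and every such coefficient sequence C, all greedy expansions of f with respect to D with prescribed coefficients C and weakening parameter t = 1 converge to f. -/
/-!
Write `s n = ⟪F n, φ n⟫` for the greedy step in the direct sum; it dominates `⟪F n i, g⟫` for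
every coordinate `i` and every `g ∈ D i`. The energy identity for `‖F n‖²` together with
`∑ c = ∞` forces `s n ≤ ε` infinitely often. Fix a coordinate `i` and let `d` be the coefficient
sequence restricted to the steps acting on `i`. If `∑ d < ∞`, the `i`-th coordinates form a Cauchy
sequence that is infinitely often almost orthogonal to the total set `D i`, so they tend to `0`.
If `∑ d = ∞`, the `i`-th coordinates sampled at those steps form a greedy expansion in `H i` with
admissible coefficients, which converges by hypothesis; between two such steps the coordinate
does not move.
-/

open Filter Topology RealInnerProductSpace

open UniformSpace in
theorem tendsto_norm_zero_of_cauchySeq_of_frequently_abs_inner_le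
    {X : Type*} [NormedAddCommGroup X] [InnerProductSpace ℝ X] {D : Set X}
    (hD : (Submodule.span ℝ D).topologicalClosure = ⊤) {v : ℕ → X} (hv : CauchySeq v)
    (hsmall : ∀ ε > 0, ∃ᶠ n in atTop, ∀ g ∈ D, |⟪v n, g⟫| ≤ ε) :
    Tendsto (fun n => ‖v n‖) atTop (𝓝 0) := by
  -- The limit of `v` in the completion is orthogonal to the total set `D`, hence zero.
  let ι : X →L[ℝ] Completion X := Completion.toComplL
  obtain ⟨L, hL⟩ := cauchySeq_tendsto_of_complete (ι.uniformContinuous.comp_cauchySeq hv)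
  have hperp : Submodule.span ℝ (ι '' D) ≤ (ℝ ∙ L)ᗮ := by
    refine Submodule.span_le.2 ?_
    rintro _ ⟨g, hg, rfl⟩
    refine Submodule.mem_orthogonal_singleton_iff_inner_left.2 (eq_of_forall_dist_le fun ε hε => ?_)
    have hlim : Tendsto (fun n => ⟪v n, g⟫) atTop (𝓝 ⟪L, ι g⟫) := by
      simpa [ι, Completion.inner_coe] using (hL.inner (𝕜 := ℝ) (tendsto_const_nhds (x := ι g)))
    rw [Real.dist_eq, sub_zero, real_inner_comm]
    exact (isClosed_le continuous_abs continuous_const).mem_of_frequently_of_tendsto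
      ((hsmall ε hε).mono fun n hn => hn g hg) hlim
  have hdense : (Submodule.span ℝ (ι '' D)).topologicalClosure = ⊤ := by
    have := Completion.denseRange_coe.topologicalClosure_map_submodule (f := ι) hD
    rwa [Submodule.map_span] at this
  have hL0 : L = 0 := by
    have hmem : L ∈ (ℝ ∙ L)ᗮ :=
      (hdense ▸ Submodule.topologicalClosure_minimal _ hperp (Submodule.isClosed_orthogonal _))
        Submodule.mem_top
    exact inner_self_eq_zero.1 (Submodule.mem_orthogonal_singleton_iff_inner_left.1 hmem)
  simpa [ι, hL0] using hL.norm

theorem PiLp.inner_single_right {ι 𝕜 : Type*} [Fintype ι] [DecidableEq ι] [RCLike 𝕜]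
    {β : ι → Type*} [∀ i, NormedAddCommGroup (β i)] [∀ i, InnerProductSpace 𝕜 (β i)]
    (x : PiLp 2 β) (i : ι) (a : β i) : inner 𝕜 x (PiLp.single 2 i a) = inner 𝕜 (x i) a := by
  rw [PiLp.inner_apply, Fintype.sum_eq_single i fun k hk => by simp [Pi.single_eq_of_ne hk]]
  simp

theorem PiLp.tendsto_norm_zero_of_forall {ι : Type*} [Fintype ι] {β : ι → Type*}
    [∀ i, NormedAddCommGroup (β i)] {α : Type*} {l : Filter α} {F : α → PiLp 2 β}
    (h : ∀ i, Tendsto (fun n => ‖F n i‖) l (𝓝 0)) : Tendsto (fun n => ‖F n‖) l (𝓝 0) := by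
  have hcoord : Tendsto (fun n => WithLp.ofLp (F n)) l (𝓝 0) :=
    tendsto_pi_nhds.2 fun i => tendsto_zero_iff_norm_tendsto_zero.2 (h i)
  simpa using
    tendsto_zero_iff_norm_tendsto_zero.1 (((PiLp.continuous_toLp 2 β).tendsto 0).comp hcoord)

theorem Nat.apply_nth_count_eq {α : Type*} {p : ℕ → Prop} [DecidablePred p] {G : ℕ → α}
    (hp : {n | p n}.Infinite) (hG : ∀ n, ¬p n → G (n + 1) = G n) (n : ℕ) :
    G (nth p (count p n)) = G n := by
  suffices ∀ m, n ≤ m → m ≤ nth p (count p n) → G m = G n from this _ (le_nth_count hp n) le_rfl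
  intro m hnm
  induction m, hnm using Nat.le_induction with
  | base => exact fun _ => rfl
  | succ m hnm ih =>
    intro hm
    have hpm : ¬p m := fun hpm =>
      (nth_count hpm ▸ (nth_monotone hp (count_monotone p hnm))).not_gt hm
    rw [hG m hpm, ih (Nat.le_of_succ_le hm)]

theorem Nat.tendsto_count_atTop {p : ℕ → Prop} [DecidablePred p] (hp : {n | p n}.Infinite) :
    Tendsto (count p) atTop atTop :=
  tendsto_atTop_atTop.2 fun b =>
    ⟨nth p b, fun _ hn => count_nth_of_infinite hp b ▸ count_monotone p hn⟩

structure IsAdmissibleCoeffs (c : ℕ → ℝ) : Prop where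
  pos : ∀ n, 0 < c n
  tendsto_zero : Tendsto c atTop (𝓝 0)
  tendsto_sum : Tendsto (fun n => ∑ m ∈ Finset.range n, c m) atTop atTop

theorem IsAdmissibleCoeffs.comp_nth {c : ℕ → ℝ} (hc : IsAdmissibleCoeffs c) {p : ℕ → Prop}
    (hp : {n | p n}.Infinite) (hsum : ¬Summable ({n | p n}.indicator c)) :
    IsAdmissibleCoeffs (c ∘ Nat.nth p) where
  pos n := hc.pos _
  tendsto_zero := hc.tendsto_zero.comp (Nat.nth_strictMono hp).tendsto_atTop
  tendsto_sum := by
    refine (not_summable_iff_tendsto_nat_atTop_of_nonneg fun n => (hc.pos _).le).1 ?_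
    have hcomp : (fun k => c (Nat.nth p k)) = {n | p n}.indicator c ∘ Nat.nth p :=
      funext fun k => (Set.indicator_of_mem (Nat.nth_mem_of_infinite hp k) c).symm
    rwa [hcomp, (Nat.nth_injective hp).summable_iff fun n hn =>
      Set.indicator_of_notMem (by rwa [Nat.range_nth_of_infinite hp] at hn) c]

section Greedy

variable {X : Type*} [NormedAddCommGroup X] [InnerProductSpace ℝ X]

structure IsGreedyExpansion_s16 (D : Set X) (c : ℕ → ℝ) (φ F : ℕ → X) : Prop where
  mem : ∀ m, φ m ∈ D
  inner_eq_sSup : ∀ m, ⟪F m, φ m⟫ = sSup ((fun g => ⟪F m, g⟫) '' D)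
  succ : ∀ m, F (m + 1) = F m - c m • φ m

def GreedyExpansionsConverge (D : Set X) : Prop :=
  ∀ c, IsAdmissibleCoeffs c → ∀ φ F, IsGreedyExpansion_s16 D c φ F →
    Tendsto (fun n => ‖F n‖) atTop (𝓝 0)

theorem IsGreedyExpansion_s16.isGreatest {D : Set X} {c : ℕ → ℝ} {φ F : ℕ → X}
    (h : IsGreedyExpansion_s16 D c φ F) (hD : ∀ g ∈ D, ‖g‖ ≤ 1) (m : ℕ) :
    IsGreatest ((fun g => ⟪F m, g⟫) '' D) ⟪F m, φ m⟫ := by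
  have hbdd : BddAbove ((fun g => ⟪F m, g⟫) '' D) := ⟨‖F m‖, by
    rintro _ ⟨g, hg, rfl⟩
    exact (real_inner_le_norm _ _).trans (mul_le_of_le_one_right (norm_nonneg _) (hD g hg))⟩
  exact ⟨⟨φ m, h.mem m, rfl⟩, fun y hy => h.inner_eq_sSup m ▸ le_csSup hbdd hy⟩

/-- If `⟪F n, φ n⟫ > ε` eventually, the energy identity makes `‖F n‖² + ε ∑_{m<n} c m`
eventually nonincreasing, while it tends to `∞`. -/
theorem frequently_inner_le_of_succ_eq {c : ℕ → ℝ} (hc : IsAdmissibleCoeffs c) {φ F : ℕ → X}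
    (hφ : ∀ n, ‖φ n‖ ≤ 1) (hF : ∀ n, F (n + 1) = F n - c n • φ n) {ε : ℝ} (hε : 0 < ε) :
    ∃ᶠ n in atTop, ⟪F n, φ n⟫ ≤ ε := by
  by_contra hfreq
  simp only [not_frequently, not_le] at hfreq
  set u : ℕ → ℝ := fun n => ‖F n‖ ^ 2 + ε * ∑ m ∈ Finset.range n, c m
  have hstep : ∀ᶠ n in atTop, u (n + 1) ≤ u n := by
    filter_upwards [hfreq, hc.tendsto_zero.eventually (gt_mem_nhds hε)] with n hs hcn
    have henergy : ‖F (n + 1)‖ ^ 2 = ‖F n‖ ^ 2 - 2 * (c n * ⟪F n, φ n⟫) + c n ^ 2 * ‖φ n‖ ^ 2 := by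
      rw [hF n, norm_sub_sq_real, real_inner_smul_right, norm_smul, Real.norm_of_nonneg
        (hc.pos n).le, mul_pow]
    have hφn : ‖φ n‖ ^ 2 ≤ 1 := pow_le_one₀ (norm_nonneg _) (hφ n)
    simp only [u, Finset.sum_range_succ, henergy]
    nlinarith [hc.pos n]
  obtain ⟨K, hK⟩ := eventually_atTop.1 hstep
  have hbound : ∀ n, K ≤ n → u n ≤ u K := fun n hn => by
    induction n, hn using Nat.le_induction with
    | base => exact le_rfl
    | succ n hn ih => exact (hK n hn).trans ih
  have hu : Tendsto u atTop atTop :=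
    tendsto_atTop_mono (fun n => le_add_of_nonneg_left (sq_nonneg _))
      (hc.tendsto_sum.const_mul_atTop hε)
  obtain ⟨n, hn, hnK⟩ := ((hu.eventually_gt_atTop (u K)).and (eventually_ge_atTop K)).exists
  exact (hbound n hnK).not_gt hn

section Interleaved

variable {D : Set X} {c : ℕ → ℝ} {p : ℕ → Prop} {ψ G : ℕ → X}

theorem tendsto_norm_zero_of_summable_indicator (hunit : ∀ g ∈ D, ‖g‖ ≤ 1)
    (hsymm : ∀ g ∈ D, -g ∈ D) (hdense : (Submodule.span ℝ D).topologicalClosure = ⊤)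
    (hc : ∀ n, 0 ≤ c n) (hψ : ∀ n, p n → ψ n ∈ D) (hψ0 : ∀ n, ¬p n → ψ n = 0)
    (hG : ∀ n, G (n + 1) = G n - c n • ψ n)
    (hsmall : ∀ ε > 0, ∃ᶠ n in atTop, ∀ g ∈ D, ⟪G n, g⟫ ≤ ε)
    (hsum : Summable ({n | p n}.indicator c)) :
    Tendsto (fun n => ‖G n‖) atTop (𝓝 0) := by
  have hdist : ∀ n, dist (G n) (G (n + 1)) ≤ {n | p n}.indicator c n := fun n => by
    rw [dist_eq_norm, hG n, sub_sub_cancel, norm_smul, Real.norm_of_nonneg (hc n)]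
    by_cases hpn : p n
    · rw [Set.indicator_of_mem (show n ∈ {n | p n} from hpn)]
      exact mul_le_of_le_one_right (hc n) (hunit _ (hψ n hpn))
    · rw [Set.indicator_of_notMem (show n ∉ {n | p n} from hpn), hψ0 n hpn, norm_zero, mul_zero]
  refine tendsto_norm_zero_of_cauchySeq_of_frequently_abs_inner_le hdense
    (cauchySeq_of_dist_le_of_summable _ hdist hsum) fun ε hε => ?_
  refine (hsmall ε hε).mono fun n hn g hg => abs_le.2 ⟨?_, hn g hg⟩
  have := hn (-g) (hsymm g hg)
  rw [inner_neg_right] at this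
  linarith

theorem tendsto_norm_zero_of_not_summable_indicator (hconv : GreedyExpansionsConverge D)
    (hc : IsAdmissibleCoeffs c) (hψ : ∀ n, p n → ψ n ∈ D) (hψ0 : ∀ n, ¬p n → ψ n = 0)
    (hG : ∀ n, G (n + 1) = G n - c n • ψ n)
    (hgreedy : ∀ n, p n → IsGreatest ((fun g => ⟪G n, g⟫) '' D) ⟪G n, ψ n⟫)
    (hsum : ¬Summable ({n | p n}.indicator c)) :
    Tendsto (fun n => ‖G n‖) atTop (𝓝 0) := by
  classical
  have hp : {n | p n}.Infinite := fun hfin =>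
    hsum (summable_subtype_iff_indicator.1 (hfin.summable c))
  have hstay : ∀ n, ¬p n → G (n + 1) = G n := fun n hn => by
    rw [hG n, hψ0 n hn, smul_zero, sub_zero]
  have hsub : IsGreedyExpansion_s16 D (c ∘ Nat.nth p) (ψ ∘ Nat.nth p) (G ∘ Nat.nth p) := by
    refine ⟨fun k => hψ _ (Nat.nth_mem_of_infinite hp k),
      fun k => (hgreedy _ (Nat.nth_mem_of_infinite hp k)).csSup_eq.symm, fun k => ?_⟩
    have hnext := Nat.apply_nth_count_eq hp hstay (Nat.nth p k + 1)
    rw [Nat.count_nth_succ_of_infinite hp] at hnext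
    simp only [Function.comp, hnext, hG]
  refine ((hconv _ (hc.comp_nth hp hsum) _ _ hsub).comp (Nat.tendsto_count_atTop hp)).congr
    fun n => ?_
  simp [Nat.apply_nth_count_eq hp hstay n]

end Interleaved

end Greedy

theorem IsGreedyExpansion_s16.tendsto_norm_apply_zero {ι : Type*} [Fintype ι] [DecidableEq ι]
    {H : ι → Type*} [∀ i, NormedAddCommGroup (H i)] [∀ i, InnerProductSpace ℝ (H i)]
    {D : ∀ i, Set (H i)} (hunit : ∀ i, ∀ g ∈ D i, ‖g‖ = 1) (hsymm : ∀ i, ∀ g ∈ D i, -g ∈ D i)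
    (hdense : ∀ i, (Submodule.span ℝ (D i)).topologicalClosure = ⊤)
    (hconv : ∀ i, GreedyExpansionsConverge (D i)) {c : ℕ → ℝ} (hc : IsAdmissibleCoeffs c)
    {φ F : ℕ → PiLp 2 H}
    (h : IsGreedyExpansion_s16 {x | ∃ i, ∃ g ∈ D i, x = PiLp.single 2 i g} c φ F) (i : ι) :
    Tendsto (fun n => ‖F n i‖) atTop (𝓝 0) := by
  have hunit' : ∀ x ∈ {x | ∃ i, ∃ g ∈ D i, x = PiLp.single 2 i g}, ‖x‖ ≤ 1 := by
    rintro _ ⟨k, g, hg, rfl⟩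
    rw [PiLp.norm_single, hunit k g hg]
  have hmax : ∀ n, ∀ g ∈ D i, ⟪F n i, g⟫ ≤ ⟪F n, φ n⟫ := fun n g hg => by
    simpa [PiLp.inner_single_right] using (h.isGreatest hunit' n).2 ⟨_, ⟨i, g, hg, rfl⟩, rfl⟩
  choose j ψ hψ hφ using h.mem
  have hactive : ∀ n, j n = i → φ n i ∈ D i ∧ ⟪F n, φ n⟫ = ⟪F n i, φ n i⟫ := by
    rintro n rfl
    simp [hφ n, PiLp.inner_single_right, hψ n]
  have hidle : ∀ n, ¬j n = i → φ n i = 0 := fun n hn => by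
    rw [hφ n]
    exact PiLp.single_eq_of_ne' _ hn _
  have hsucc : ∀ n, F (n + 1) i = F n i - c n • φ n i := fun n => by
    rw [h.succ n]
    rfl
  have hsmall : ∀ ε > 0, ∃ᶠ n in atTop, ∀ g ∈ D i, ⟪F n i, g⟫ ≤ ε := fun ε hε =>
    (frequently_inner_le_of_succ_eq hc (fun n => hunit' _ (h.mem n)) h.succ hε).mono
      fun n hn g hg => (hmax n g hg).trans hn
  by_cases hsum : Summable ({n | j n = i}.indicator c)
  · exact tendsto_norm_zero_of_summable_indicator (fun g hg => (hunit i g hg).le) (hsymm i)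
      (hdense i) (fun n => (hc.pos n).le) (fun n hn => (hactive n hn).1) hidle hsucc hsmall hsum
  · refine tendsto_norm_zero_of_not_summable_indicator (hconv i) hc (fun n hn => (hactive n hn).1)
      hidle hsucc (fun n hn => ⟨⟨_, (hactive n hn).1, rfl⟩, ?_⟩) hsum
    rintro _ ⟨g, hg, rfl⟩
    exact (hactive n hn).2 ▸ hmax n g hg

theorem stmt_16 (N : ℕ) (H : Fin N → Type*)
    [∀ j, NormedAddCommGroup (H j)] [∀ j, InnerProductSpace ℝ (H j)]
    (D : ∀ j, Set (H j))
    (hunit : ∀ j, ∀ g ∈ D j, ‖g‖ = 1)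
    (hsymm : ∀ j, ∀ g ∈ D j, -g ∈ D j)
    (hcomplete : ∀ j, (Submodule.span ℝ (D j)).topologicalClosure = ⊤)
    (hconv : ∀ j, ∀ c : ℕ → ℝ, (∀ p, 0 < c p) →
      Tendsto c atTop (nhds 0) →
      Tendsto (fun n => ∑ p ∈ Finset.range n, c p) atTop atTop →
      ∀ (h : H j) (φ F : ℕ → H j),
        (∀ m, φ m ∈ D j) → F 0 = h →
        (∀ m, ⟪F m, φ m⟫ = sSup ((fun g => ⟪F m, g⟫) '' (D j))) →
        (∀ m, F (m + 1) = F m - c m • φ m) →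
        Tendsto (fun n => ‖F n‖) atTop (nhds 0))
    (DD : Set (PiLp 2 H))
    (hDD : DD = {x | ∃ (j : Fin N), ∃ φ ∈ D j,
      x = (WithLp.equiv 2 (∀ j, H j)).symm (Pi.single j φ)}) :
    ∀ c : ℕ → ℝ, (∀ p, 0 < c p) →
      Tendsto c atTop (nhds 0) →
      Tendsto (fun n => ∑ p ∈ Finset.range n, c p) atTop atTop →
      ∀ (f : PiLp 2 H) (φ F : ℕ → PiLp 2 H),
        (∀ m, φ m ∈ DD) → F 0 = f →
        (∀ m, ⟪F m, φ m⟫ = sSup ((fun g => ⟪F m, g⟫) '' DD)) →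
        (∀ m, F (m + 1) = F m - c m • φ m) →
        Tendsto (fun n => ‖F n‖) atTop (nhds 0) := by
  intro c hcpos hc0 hcsum _ φ F hφ _ hsup hsucc
  subst hDD
  have hconv' : ∀ j, GreedyExpansionsConverge (D j) := fun j c hc φ F hF =>
    hconv j c hc.pos hc.tendsto_zero hc.tendsto_sum _ φ F hF.mem rfl hF.inner_eq_sSup hF.succ
  exact PiLp.tendsto_norm_zero_of_forall fun i =>
    IsGreedyExpansion_s16.tendsto_norm_apply_zero hunit hsymm hcomplete hconv'
      ⟨hcpos, hc0, hcsum⟩ ⟨hφ, hsup, hsucc⟩ i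
end
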